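/- arXiv:2105.09925 — 6 statements merged into one kernel-verified Lean document; each statement's English description precedes it below -/
import Mathlib

section
/- For every ξ with 0 < ξ < 1, the matrix 𝒫(1/2, 1/(1+ξ), ξ) belongs to USD₂ but does not belong to the convex hull (in the space of real 3×3 matrices) of USD₂ ∩ SIM₂. -/
open Matrix
open scoped ComplexOrder

/-- A qubit state: a positive semidefinite 2×2 complex matrix with trace 1. -/
def QubitState (ρ : Matrix (Fin 2) (Fin 2) ℂ) : Prop :=
  ρ.PosSemidef ∧ ρ.trace = 1

/-- A qubit effect: a 2×2 complex matrix `E` with both `E` and `1 - E` positive semidefinite. -/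
def QubitEffect (E : Matrix (Fin 2) (Fin 2) ℂ) : Prop :=
  E.PosSemidef ∧ (1 - E).PosSemidef

/-- A realization of a 3×3 correlation matrix `P` by three qubit states, a three-outcome
qubit POVM `(M11, M21, M31)` and a two-outcome qubit POVM `(M12, M22)`. -/
def IsRealization (P : Matrix (Fin 3) (Fin 3) ℝ)
    (ρ : Fin 3 → Matrix (Fin 2) (Fin 2) ℂ)
    (M11 M21 M31 M12 M22 : Matrix (Fin 2) (Fin 2) ℂ) : Prop :=
  (∀ x, QubitState (ρ x)) ∧
  QubitEffect M11 ∧ QubitEffect M21 ∧ QubitEffect M31 ∧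
  M11 + M21 + M31 = 1 ∧
  QubitEffect M12 ∧ QubitEffect M22 ∧
  M12 + M22 = 1 ∧
  (∀ x, P x 0 = ((ρ x * M11).trace).re ∧
        P x 1 = ((ρ x * M21).trace).re ∧
        P x 2 = ((ρ x * M12).trace).re)

/-- The USD pattern of zeros and ones of the correlation matrix, Eq. (3). -/
def USDpattern (P : Matrix (Fin 3) (Fin 3) ℝ) : Prop :=
  P 0 2 = 0 ∧ P 1 1 = 0 ∧ P 1 2 = 1 ∧ P 2 0 = 0

/-- The set USD₂ of qubit USD correlations. -/
def USD2 (P : Matrix (Fin 3) (Fin 3) ℝ) : Prop :=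
  USDpattern P ∧
  ∃ ρ M11 M21 M31 M12 M22, IsRealization P ρ M11 M21 M31 M12 M22

/-- A three-outcome qubit POVM is simulable by dichotomic measurements, Eq. (1). -/
def Simulable (M11 M21 M31 : Matrix (Fin 2) (Fin 2) ℂ) : Prop :=
  ∃ p1 p2 p3 : ℝ, ∃ N11 N22 N13 : Matrix (Fin 2) (Fin 2) ℂ,
    0 ≤ p1 ∧ 0 ≤ p2 ∧ 0 ≤ p3 ∧ p1 + p2 + p3 = 1 ∧
    QubitEffect N11 ∧ QubitEffect N22 ∧ QubitEffect N13 ∧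
    M11 = p1 • N11 + p3 • N13 ∧
    M21 = p1 • (1 - N11) + p2 • N22 ∧
    M31 = p2 • (1 - N22) + p3 • (1 - N13)

/-- The set SIM₂ of simulable trichotomic qubit correlations in the minimal scenario. -/
def SIM2 (P : Matrix (Fin 3) (Fin 3) ℝ) : Prop :=
  ∃ ρ M11 M21 M31 M12 M22, IsRealization P ρ M11 M21 M31 M12 M22 ∧
    Simulable M11 M21 M31

/-- The parameterized USD correlation matrix 𝒫(p, q, ξ) of Eq. (4). -/
noncomputable def Pmat (p q ξ : ℝ) : Matrix (Fin 3) (Fin 3) ℝ :=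
  !![p * ξ,       q,           0;
     p * (1 - ξ), 0,           1;
     0,           q * (1 - ξ), ξ]

open ComplexConjugate

section helpers
variable {A : Matrix (Fin 2) (Fin 2) ℂ}

lemma form_expand (A : Matrix (Fin 2) (Fin 2) ℂ) (x : Fin 2 → ℂ) :
    star x ⬝ᵥ A.mulVec x =
      conj (x 0) * A 0 0 * x 0 + conj (x 0) * A 0 1 * x 1 +
      conj (x 1) * A 1 0 * x 0 + conj (x 1) * A 1 1 * x 1 := by
  simp [dotProduct, mulVec, Fin.sum_univ_two]
  ring

lemma herm_diag_im (hA : A.IsHermitian) (i : Fin 2) : (A i i).im = 0 := by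
  have h := congrFun (congrFun hA i) i
  rw [conjTranspose_apply] at h
  have := congrArg Complex.im h
  simp at this
  linarith

lemma posSemidef_fin_two (hherm : A.IsHermitian) (ha : 0 ≤ (A 0 0).re)
    (hc : 0 ≤ (A 1 1).re) (hd : Complex.normSq (A 0 1) ≤ (A 0 0).re * (A 1 1).re) :
    A.PosSemidef := by
  refine Matrix.PosSemidef.of_dotProduct_mulVec_nonneg hherm fun x => ?_
  rw [form_expand]
  set a := (A 0 0).re
  set c := (A 1 1).re
  have h00 : A 0 0 = (a : ℂ) := by apply Complex.ext <;> simp [herm_diag_im hherm 0, a]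
  have h11 : A 1 1 = (c : ℂ) := by apply Complex.ext <;> simp [herm_diag_im hherm 1, c]
  have h10 : A 1 0 = conj (A 0 1) := by
    conv_lhs => rw [← hherm]
    simp [conjTranspose_apply]
  rw [h00, h11, h10]
  set b := A 0 1
  rw [Complex.le_def]
  constructor
  · simp only [Complex.add_re, Complex.mul_re, Complex.mul_im, Complex.ofReal_re,
      Complex.ofReal_im, Complex.conj_re, Complex.conj_im, Complex.zero_re]
    rw [Complex.normSq_apply] at hd
    rcases lt_or_eq_of_le ha with ha' | ha'
    · nlinarith [sq_nonneg (a * (x 0).re + b.re * (x 1).re - b.im * (x 1).im),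
        sq_nonneg (a * (x 0).im + b.re * (x 1).im + b.im * (x 1).re),
        mul_nonneg (by nlinarith : (0:ℝ) ≤ a * c - b.re^2 - b.im^2)
          (by positivity : (0:ℝ) ≤ (x 1).re^2 + (x 1).im^2)]
    · have hb : b.re = 0 ∧ b.im = 0 := by
        constructor <;> nlinarith [sq_nonneg b.re, sq_nonneg b.im]
      rw [hb.1, hb.2, ← ha']
      nlinarith [sq_nonneg (x 1).re, sq_nonneg (x 1).im]
  · simp only [Complex.add_im, Complex.mul_re, Complex.mul_im, Complex.ofReal_re,
      Complex.ofReal_im, Complex.conj_re, Complex.conj_im, Complex.zero_im]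
    ring

end helpers

section rmat

noncomputable def rmat (a b c : ℝ) : Matrix (Fin 2) (Fin 2) ℂ := !![(a:ℂ), (b:ℂ); (b:ℂ), (c:ℂ)]

lemma rmat_psd {a b c : ℝ} (ha : 0 ≤ a) (hc : 0 ≤ c) (h : b^2 ≤ a*c) :
    (rmat a b c).PosSemidef := by
  apply posSemidef_fin_two
  · ext i j
    fin_cases i <;> fin_cases j <;> simp [rmat, conjTranspose_apply]
  · simpa [rmat] using ha
  · simpa [rmat] using hc
  · simp [rmat, Matrix.vecHead, Matrix.vecTail, Complex.normSq_ofReal]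
    nlinarith

lemma one_sub_rmat (a b c : ℝ) :
    (1 : Matrix (Fin 2) (Fin 2) ℂ) - rmat a b c = rmat (1-a) (-b) (1-c) := by
  ext i j
  fin_cases i <;> fin_cases j <;>
    simp [rmat, Matrix.one_apply] <;> push_cast <;> ring

lemma rmat_effect {a b c : ℝ} (ha : 0 ≤ a) (hc : 0 ≤ c) (h : b^2 ≤ a*c)
    (ha1 : a ≤ 1) (hc1 : c ≤ 1) (h1 : b^2 ≤ (1-a)*(1-c)) :
    QubitEffect (rmat a b c) := by
  refine ⟨rmat_psd ha hc h, ?_⟩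
  rw [one_sub_rmat]
  exact rmat_psd (by linarith) (by linarith) (by nlinarith)

lemma rmat_trace (a b c : ℝ) : (rmat a b c).trace = ((a + c : ℝ) : ℂ) := by
  simp [rmat, Matrix.trace_fin_two]

lemma rmat_add (a b c d e f : ℝ) :
    rmat a b c + rmat d e f = rmat (a+d) (b+e) (c+f) := by
  ext i j
  fin_cases i <;> fin_cases j <;> simp [rmat] <;> push_cast <;> ring

lemma rmat_one : rmat 1 0 1 = 1 := by
  ext i j
  fin_cases i <;> fin_cases j <;> simp [rmat, Matrix.one_apply]

lemma rmat_mul_trace_re (a b c d e f : ℝ) :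
    ((rmat a b c * rmat d e f).trace).re = a*d + 2*(b*e) + c*f := by
  simp only [rmat, Matrix.mul_fin_two, Matrix.trace_fin_two_of]
  push_cast
  simp only [← Complex.ofReal_mul, ← Complex.ofReal_add, Complex.add_re, Complex.mul_re,
    Complex.ofReal_re, Complex.ofReal_im]
  ring

end rmat

lemma part1 (ξ : ℝ) (h0 : 0 < ξ) (h1 : ξ < 1) :
    USD2 (Pmat (1/2) (1/(1+ξ)) ξ) := by
  have h1ξ : (0:ℝ) < 1 + ξ := by linarith
  set s : ℝ := Real.sqrt (ξ * (1 - ξ)) with hsdef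
  have hs0 : 0 ≤ s := Real.sqrt_nonneg _
  have hs2 : s ^ 2 = ξ * (1 - ξ) := Real.sq_sqrt (by nlinarith)
  have hu : (1/(1+ξ)) * (1+ξ) = 1 := by field_simp
  have hu0 : 0 < 1/(1+ξ) := by positivity
  have hu1 : 1/(1+ξ) ≤ 1 := by
    rw [div_le_one h1ξ]; linarith
  constructor
  · refine ⟨?_, ?_, ?_, ?_⟩ <;> simp [Pmat]
  · refine ⟨![rmat 1 0 0, rmat 0 0 1, rmat (1-ξ) s ξ],
      rmat (ξ/2) (-s/2) ((1-ξ)/2), rmat (1/(1+ξ)) 0 0,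
      rmat (1 - ξ/2 - 1/(1+ξ)) (s/2) ((1+ξ)/2),
      rmat 0 0 1, rmat 1 0 0, ?_, ?_, ?_, ?_, ?_, ?_, ?_, ?_, ?_⟩
    · -- states
      intro x
      fin_cases x
      · show QubitState (rmat 1 0 0)
        exact ⟨rmat_psd (by norm_num) (by norm_num) (by norm_num), by rw [rmat_trace]; norm_num⟩
      · show QubitState (rmat 0 0 1)
        exact ⟨rmat_psd (by norm_num) (by norm_num) (by norm_num), by rw [rmat_trace]; norm_num⟩
      · show QubitState (rmat (1-ξ) s ξ)
        refine ⟨rmat_psd (by linarith) (by linarith) (by nlinarith), ?_⟩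
        rw [rmat_trace]; norm_num
    · -- M11 effect
      exact rmat_effect (by linarith) (by linarith) (by nlinarith)
        (by linarith) (by linarith) (by nlinarith)
    · -- M21 effect
      exact rmat_effect (by positivity) le_rfl (by nlinarith) hu1 (by norm_num) (by nlinarith)
    · -- M31 effect
      have hA : 0 ≤ 1 - ξ/2 - 1/(1+ξ) := by
        have : 1 - ξ/2 - 1/(1+ξ) = ξ*(1-ξ)/(2*(1+ξ)) := by field_simp; ring
        rw [this]
        apply div_nonneg (by nlinarith) (by linarith)
      have hAval : 1 - ξ/2 - 1/(1+ξ) = ξ*(1-ξ)/(2*(1+ξ)) := by field_simp; ring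
      refine rmat_effect hA (by linarith) ?_ (by linarith) (by linarith) ?_
      · rw [hAval]
        rw [div_mul_eq_mul_div, le_div_iff₀ (by linarith)]
        nlinarith
      · have : (1 - (1 - ξ/2 - 1/(1+ξ))) * (1 - (1+ξ)/2) = (ξ/2 + 1/(1+ξ)) * ((1-ξ)/2) := by
          ring
        rw [this]
        nlinarith [mul_nonneg (le_of_lt hu0) (by linarith : (0:ℝ) ≤ 1 - ξ)]
    · -- sum of three
      rw [rmat_add, rmat_add]
      rw [show ξ/2 + 1/(1+ξ) + (1 - ξ/2 - 1/(1+ξ)) = 1 by ring,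
        show -s/2 + 0 + s/2 = 0 by ring,
        show (1-ξ)/2 + 0 + (1+ξ)/2 = 1 by ring]
      exact rmat_one
    · exact rmat_effect (by norm_num) (by norm_num) (by norm_num) (by norm_num) (by norm_num)
        (by norm_num)
    · exact rmat_effect (by norm_num) (by norm_num) (by norm_num) (by norm_num) (by norm_num)
        (by norm_num)
    · rw [rmat_add]
      norm_num
      exact rmat_one
    · -- trace entries
      intro x
      fin_cases x
      · refine ⟨?_, ?_, ?_⟩
        · show Pmat (1/2) (1/(1+ξ)) ξ 0 0 = ((rmat 1 0 0 * rmat (ξ/2) (-s/2) ((1-ξ)/2)).trace).re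
          rw [rmat_mul_trace_re]; simp [Pmat]; ring
        · show Pmat (1/2) (1/(1+ξ)) ξ 0 1 = ((rmat 1 0 0 * rmat (1/(1+ξ)) 0 0).trace).re
          rw [rmat_mul_trace_re]; simp [Pmat]
        · show Pmat (1/2) (1/(1+ξ)) ξ 0 2 = ((rmat 1 0 0 * rmat 0 0 1).trace).re
          rw [rmat_mul_trace_re]; simp [Pmat]
      · refine ⟨?_, ?_, ?_⟩
        · show Pmat (1/2) (1/(1+ξ)) ξ 1 0 = ((rmat 0 0 1 * rmat (ξ/2) (-s/2) ((1-ξ)/2)).trace).re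
          rw [rmat_mul_trace_re]; simp [Pmat]; ring
        · show Pmat (1/2) (1/(1+ξ)) ξ 1 1 = ((rmat 0 0 1 * rmat (1/(1+ξ)) 0 0).trace).re
          rw [rmat_mul_trace_re]; simp [Pmat]
        · show Pmat (1/2) (1/(1+ξ)) ξ 1 2 = ((rmat 0 0 1 * rmat 0 0 1).trace).re
          rw [rmat_mul_trace_re]; simp [Pmat]
      · refine ⟨?_, ?_, ?_⟩
        · show Pmat (1/2) (1/(1+ξ)) ξ 2 0 =
            ((rmat (1-ξ) s ξ * rmat (ξ/2) (-s/2) ((1-ξ)/2)).trace).re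
          rw [rmat_mul_trace_re]; simp [Pmat]; nlinarith [hs2]
        · show Pmat (1/2) (1/(1+ξ)) ξ 2 1 = ((rmat (1-ξ) s ξ * rmat (1/(1+ξ)) 0 0).trace).re
          rw [rmat_mul_trace_re]; simp [Pmat]; ring
        · show Pmat (1/2) (1/(1+ξ)) ξ 2 2 = ((rmat (1-ξ) s ξ * rmat 0 0 1).trace).re
          rw [rmat_mul_trace_re]; simp [Pmat]

section p2
variable {A B S P X : Matrix (Fin 2) (Fin 2) ℂ}



-- ring identities for 2x2 matrices
lemma trace_mul_self2 (A : Matrix (Fin 2) (Fin 2) ℂ) :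
    (A*A).trace = (A.trace)^2 - 2*A.det := by
  simp [Matrix.trace_fin_two, Matrix.mul_apply, Fin.sum_univ_two, Matrix.det_fin_two]
  ring

lemma cayley2 (A : Matrix (Fin 2) (Fin 2) ℂ) :
    A*A = A.trace • A - A.det • 1 := by
  ext i j
  fin_cases i <;> fin_cases j <;>
    simp [Matrix.mul_apply, Fin.sum_univ_two, Matrix.det_fin_two, Matrix.trace_fin_two,
      Matrix.one_apply] <;> ring

lemma det_one_sub2 (A : Matrix (Fin 2) (Fin 2) ℂ) :
    (1 - A).det = 1 - A.trace + A.det := by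
  simp [Matrix.det_fin_two, Matrix.trace_fin_two, Matrix.one_apply]
  ring

lemma det_sub_smul2 (A : Matrix (Fin 2) (Fin 2) ℂ) (z : ℂ) :
    (A - z • 1).det = A.det - z * A.trace + z^2 := by
  simp [Matrix.det_fin_two, Matrix.trace_fin_two, Matrix.one_apply]
  ring

lemma pxp (hdet : P.det = 0) (X : Matrix (Fin 2) (Fin 2) ℂ) :
    P * X * P = ((P*X).trace) • P := by
  rw [Matrix.det_fin_two] at hdet
  ext i j
  fin_cases i <;> fin_cases j <;>
    simp [Matrix.mul_apply, Fin.sum_univ_two, Matrix.trace_fin_two] <;>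
  [linear_combination (-(X 1 1)) * hdet; linear_combination (X 0 1) * hdet;
   linear_combination (X 1 0) * hdet; linear_combination (-(X 0 0)) * hdet]



lemma psd_diag_nonneg (hA : A.PosSemidef) (i : Fin 2) : 0 ≤ A i i := by
  have := hA.dotProduct_mulVec_nonneg (Pi.single i 1)
  simpa [dotProduct, mulVec, Pi.single_apply, Finset.sum_ite_eq] using this

lemma psd_diag_re (hA : A.PosSemidef) (i : Fin 2) : 0 ≤ (A i i).re :=
  (Complex.le_def.mp (psd_diag_nonneg hA i)).1

lemma psd_diag_im (hA : A.PosSemidef) (i : Fin 2) : (A i i).im = 0 :=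
  ((Complex.le_def.mp (psd_diag_nonneg hA i)).2).symm

lemma herm_diag_im' (hA : A.IsHermitian) (i : Fin 2) : (A i i).im = 0 := by
  have h := congrFun (congrFun hA i) i
  rw [conjTranspose_apply] at h
  have := congrArg Complex.im h
  simp at this
  linarith

lemma herm_trace_real (hA : A.IsHermitian) : A.trace = ((A.trace).re : ℂ) := by
  apply Complex.ext
  · simp
  · simp [Matrix.trace_fin_two, herm_diag_im' hA 0, herm_diag_im' hA 1]

lemma herm_det_real (hA : A.IsHermitian) :
    A.det = (((A 0 0).re * (A 1 1).re - Complex.normSq (A 0 1) : ℝ) : ℂ) := by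
  have h10 : A 1 0 = conj (A 0 1) := by
    conv_lhs => rw [← hA]; simp [conjTranspose_apply]
  have h00 : A 0 0 = ((A 0 0).re : ℂ) := by
    apply Complex.ext <;> simp [herm_diag_im' hA 0]
  have h11 : A 1 1 = ((A 1 1).re : ℂ) := by
    apply Complex.ext <;> simp [herm_diag_im' hA 1]
  rw [Matrix.det_fin_two, h10]
  rw [Complex.mul_conj]
  rw [h00, h11]
  norm_cast

lemma psd_trace_re_nonneg (hA : A.PosSemidef) : 0 ≤ (A.trace).re := by
  rw [Matrix.trace_fin_two]
  have := psd_diag_re hA 0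
  have := psd_diag_re hA 1
  simp only [Complex.add_re]
  linarith

lemma key_offdiag (a c : ℝ) (b : ℂ) (ha : 0 ≤ a) (hc : 0 ≤ c)
    (h : ∀ x : Fin 2 → ℂ, 0 ≤ (conj (x 0) * (a:ℂ) * x 0 + conj (x 0) * b * x 1 +
      conj (x 1) * conj b * x 0 + conj (x 1) * (c:ℂ) * x 1).re) :
    Complex.normSq b ≤ a * c := by
  rcases lt_or_eq_of_le ha with ha' | ha'
  · have h1 := h ![b, -(a:ℂ)]
    simp only [Matrix.cons_val_zero, Matrix.cons_val_one, Matrix.head_cons] at h1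
    simp only [Complex.add_re, Complex.mul_re, Complex.mul_im, Complex.neg_re, Complex.neg_im,
      Complex.ofReal_re, Complex.ofReal_im, Complex.conj_re, Complex.conj_im,
      Complex.normSq_apply] at h1 ⊢
    nlinarith [h1, sq_nonneg (b.re), sq_nonneg (b.im)]
  · have hb2 : Complex.normSq b ≤ 0 := by
      obtain ⟨t, hct, hc2⟩ : ∃ t : ℝ, 0 < t ∧ c * t < 2 := by
        refine ⟨1 / (c + 1), by positivity, ?_⟩
        have h1 : c * (1 / (c + 1)) ≤ 1 := by
          rw [mul_one_div, div_le_one (by linarith)]; linarith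
        linarith
      have h1 := h ![1, -(t:ℂ) * conj b]
      simp only [Matrix.cons_val_zero, Matrix.cons_val_one, Matrix.head_cons] at h1
      simp only [Complex.add_re, Complex.mul_re, Complex.mul_im, Complex.neg_re, Complex.neg_im,
        Complex.ofReal_re, Complex.ofReal_im, Complex.conj_re, Complex.conj_im,
        Complex.one_re, Complex.one_im, ← ha'] at h1
      ring_nf at h1
      simp only [Complex.normSq_apply]
      by_contra hcon
      push_neg at hcon
      have hn : 0 < b.re * b.re + b.im * b.im := hcon
      nlinarith [h1, mul_pos (mul_pos hct hn) (by linarith : (0:ℝ) < 2 - c*t)]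
    have : 0 ≤ Complex.normSq b := Complex.normSq_nonneg b
    nlinarith [mul_nonneg ha hc]

lemma psd_offdiag_sq (hA : A.PosSemidef) :
    Complex.normSq (A 0 1) ≤ (A 0 0).re * (A 1 1).re := by
  apply key_offdiag _ _ _ (psd_diag_re hA 0) (psd_diag_re hA 1)
  intro x
  have h := hA.dotProduct_mulVec_nonneg x
  rw [form_expand] at h
  have h00 : A 0 0 = ((A 0 0).re : ℂ) := by
    apply Complex.ext <;> simp [psd_diag_im hA 0]
  have h11 : A 1 1 = ((A 1 1).re : ℂ) := by
    apply Complex.ext <;> simp [psd_diag_im hA 1]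
  have h10 : A 1 0 = conj (A 0 1) := by
    conv_lhs => rw [← hA.1]
    simp [conjTranspose_apply]
  rw [h00, h11, h10] at h
  exact (Complex.le_def.mp h).1


end p2

namespace Matrix.PosSemidef
open scoped MatrixOrder

noncomputable def sqrt {A : Matrix (Fin 2) (Fin 2) ℂ} (_ : A.PosSemidef) :
    Matrix (Fin 2) (Fin 2) ℂ := CFC.sqrt A

lemma sqrt_mul_self {A : Matrix (Fin 2) (Fin 2) ℂ} (hA : A.PosSemidef) :
    hA.sqrt * hA.sqrt = A := CFC.sqrt_mul_sqrt_self A hA.nonneg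

lemma posSemidef_sqrt {A : Matrix (Fin 2) (Fin 2) ℂ} (hA : A.PosSemidef) :
    hA.sqrt.PosSemidef := (CFC.sqrt_nonneg A).posSemidef

end Matrix.PosSemidef

section p3
variable {A B S P X N : Matrix (Fin 2) (Fin 2) ℂ}

lemma psd_det_real (hA : A.PosSemidef) : ∃ d : ℝ, 0 ≤ d ∧ A.det = (d : ℂ) := by
  refine ⟨(A 0 0).re * (A 1 1).re - Complex.normSq (A 0 1), ?_, herm_det_real hA.1⟩
  have := psd_offdiag_sq hA
  linarith

lemma psd_of_herm_trace_det (hherm : A.IsHermitian) (htr : 0 ≤ (A.trace).re)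
    (hdet : 0 ≤ (A.det).re) : A.PosSemidef := by
  have hdr := herm_det_real hherm
  rw [hdr] at hdet
  simp only [Complex.ofReal_re] at hdet
  have hnsq : 0 ≤ Complex.normSq (A 0 1) := Complex.normSq_nonneg _
  rw [Matrix.trace_fin_two] at htr
  simp only [Complex.add_re] at htr
  have ha : 0 ≤ (A 0 0).re := by nlinarith
  have hc : 0 ≤ (A 1 1).re := by nlinarith
  exact posSemidef_fin_two hherm ha hc (by linarith)

lemma trace_conj_sqrt (hA : A.PosSemidef) (B : Matrix (Fin 2) (Fin 2) ℂ) :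
    (hA.sqrt * B * hA.sqrt).trace = (A * B).trace := by
  rw [Matrix.trace_mul_cycle, hA.sqrt_mul_self]

lemma psd_mul_psd_trace_nonneg (hA : A.PosSemidef) (hB : B.PosSemidef) :
    0 ≤ (A * B).trace := by
  rw [← trace_conj_sqrt hA B]
  have hpsd : (hA.sqrt * B * hA.sqrt).PosSemidef := by
    have := hB.mul_mul_conjTranspose_same hA.sqrt
    rwa [hA.posSemidef_sqrt.1.eq] at this
  rw [Matrix.trace_fin_two]
  exact add_nonneg (psd_diag_nonneg hpsd 0) (psd_diag_nonneg hpsd 1)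

lemma psd_mul_trace_re_nonneg (hA : A.PosSemidef) (hB : B.PosSemidef) :
    0 ≤ ((A * B).trace).re :=
  (Complex.le_def.mp (psd_mul_psd_trace_nonneg hA hB)).1

lemma psd_mul_trace_real (hA : A.PosSemidef) (hB : B.PosSemidef) :
    (A * B).trace = (((A * B).trace).re : ℂ) := by
  have := (Complex.le_def.mp (psd_mul_psd_trace_nonneg hA hB)).2
  apply Complex.ext
  · simp
  · simp [← this]

lemma psd_trace_zero (hA : A.PosSemidef) (h : A.trace = 0) : A = 0 := by
  have h0 : A 0 0 = 0 := by
    have h1 := psd_diag_nonneg hA 0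
    have h2 := psd_diag_nonneg hA 1
    rw [Matrix.trace_fin_two] at h
    have : A 0 0 ≤ 0 := by
      calc A 0 0 = (A 0 0 + A 1 1) - A 1 1 := by ring
      _ ≤ 0 - 0 := by rw [h]; exact sub_le_sub le_rfl h2
      _ = 0 := by ring
    exact le_antisymm this h1
  have h1 : A 1 1 = 0 := by
    rw [Matrix.trace_fin_two, h0, zero_add] at h
    exact h
  have hoff : A 0 1 = 0 := by
    have := psd_offdiag_sq hA
    rw [h0, h1] at this
    simp at this
    have h2 : Complex.normSq (A 0 1) = 0 := le_antisymm this (Complex.normSq_nonneg _)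
    exact Complex.normSq_eq_zero.mp h2
  have hoff2 : A 1 0 = 0 := by
    have h10 : A 1 0 = conj (A 0 1) := by
      conv_lhs => rw [← hA.1]
      simp [conjTranspose_apply]
    rw [h10, hoff, map_zero]
  ext i j
  fin_cases i <;> fin_cases j <;> simp [h0, h1, hoff, hoff2]

lemma psd_pair_mul_eq_zero (hA : A.PosSemidef) (hB : B.PosSemidef)
    (h : ((A * B).trace).re = 0) : A * B = 0 := by
  have htr : (A * B).trace = 0 := by
    rw [psd_mul_trace_real hA hB, h, Complex.ofReal_zero]
  -- X := sqrt B * sqrt A ; XᴴX = sqrt A * B * sqrt A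
  set sA := hA.sqrt with hsA
  set sB := hB.sqrt with hsB
  have hsAh : sAᴴ = sA := hA.posSemidef_sqrt.1.eq
  have hsBh : sBᴴ = sB := hB.posSemidef_sqrt.1.eq
  have hX : (sB * sA)ᴴ * (sB * sA) = sA * B * sA := by
    rw [Matrix.conjTranspose_mul, hsAh, hsBh]
    rw [show sA * sB * (sB * sA) = sA * (sB * sB) * sA by
      simp only [Matrix.mul_assoc]]
    rw [hB.sqrt_mul_self]
  have htr2 : ((sB * sA)ᴴ * (sB * sA)).trace = 0 := by
    rw [hX, trace_conj_sqrt hA B, htr]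
  have hXz : sB * sA = 0 := by
    have hpsd : ((sB * sA)ᴴ * (sB * sA)).PosSemidef := Matrix.posSemidef_conjTranspose_mul_self _
    have := psd_trace_zero hpsd htr2
    exact Matrix.conjTranspose_mul_self_eq_zero.mp this
  -- A * B = sA * (sA * sB) * sB  and sA * sB = (sB * sA)ᴴ = 0
  have hXh : sA * sB = 0 := by
    have := congrArg conjTranspose hXz
    rwa [Matrix.conjTranspose_mul, hsAh, hsBh, Matrix.conjTranspose_zero] at this
  calc A * B = sA * sA * (sB * sB) := by rw [hA.sqrt_mul_self, hB.sqrt_mul_self]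
  _ = sA * (sA * sB) * sB := by simp only [Matrix.mul_assoc]
  _ = 0 := by rw [hXh, Matrix.mul_zero, Matrix.zero_mul]

end p3

section p4
variable {A B S P X N ρ : Matrix (Fin 2) (Fin 2) ℂ}

lemma herm_mul_zero_swap (hA : A.IsHermitian) (hB : B.IsHermitian) (h : A * B = 0) :
    B * A = 0 := by
  have := congrArg conjTranspose h
  rwa [Matrix.conjTranspose_mul, hA.eq, hB.eq, Matrix.conjTranspose_zero] at this

lemma effect_sub_sq (hN : N.PosSemidef) (hN1 : ((1:Matrix (Fin 2) (Fin 2) ℂ) - N).PosSemidef) :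
    (N - N * N).PosSemidef := by
  have h1 : hN.sqrt * (1 - N) * hN.sqrt = N - N * N := by
    rw [Matrix.mul_sub, Matrix.mul_one, Matrix.sub_mul]
    rw [hN.sqrt_mul_self]
    congr 1
    calc hN.sqrt * N * hN.sqrt = hN.sqrt * (hN.sqrt * hN.sqrt) * hN.sqrt := by
          rw [hN.sqrt_mul_self]
    _ = (hN.sqrt * hN.sqrt) * (hN.sqrt * hN.sqrt) := by simp only [Matrix.mul_assoc]
    _ = N * N := by rw [hN.sqrt_mul_self]
  rw [← h1]
  have := hN1.mul_mul_conjTranspose_same hN.sqrt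
  rwa [hN.posSemidef_sqrt.1.eq] at this

lemma state_le_one (hρ : ρ.PosSemidef) (htr : ρ.trace = 1) :
    ((1:Matrix (Fin 2) (Fin 2) ℂ) - ρ).PosSemidef := by
  apply psd_of_herm_trace_det
  · exact Matrix.isHermitian_one.sub hρ.1
  · rw [Matrix.trace_sub, Matrix.trace_one, htr]
    norm_num
  · rw [det_one_sub2, htr]
    obtain ⟨d, hd, hdet⟩ := psd_det_real hρ
    rw [hdet]
    simp
    linarith

lemma lemmaZ (hS : S.PosSemidef) (hS2 : (S - S * S).PosSemidef) :
    ((1:Matrix (Fin 2) (Fin 2) ℂ) - S).PosSemidef := by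
  obtain ⟨d, hd0, hdet⟩ := psd_det_real hS
  set a := (S.trace).re with ha
  have ha0 : 0 ≤ a := psd_trace_re_nonneg hS
  have htr : S.trace = (a : ℂ) := herm_trace_real hS.1
  -- trace (S - S*S) ≥ 0  :  a - (a^2 - 2d) ≥ 0
  have hSS : (S*S).trace = ((a^2 - 2*d : ℝ) : ℂ) := by
    rw [trace_mul_self2, htr, hdet]; push_cast; ring
  have hE1 : 0 ≤ a - a^2 + 2*d := by
    have h1 := psd_trace_re_nonneg hS2
    rw [Matrix.trace_sub, htr, hSS] at h1
    simp only [Complex.sub_re, Complex.ofReal_re] at h1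
    linarith
  -- det (S - S*S) ≥ 0 : d * (1 - a + d) ≥ 0
  have hE2 : 0 ≤ d * (1 - a + d) := by
    obtain ⟨e, he0, hdet2⟩ := psd_det_real hS2
    have hprod : (S - S * S).det = ((d * (1 - a + d) : ℝ) : ℂ) := by
      rw [show S - S * S = S * (1 - S) by rw [Matrix.mul_sub, Matrix.mul_one],
        Matrix.det_mul, det_one_sub2, htr, hdet]
      push_cast; ring
    rw [hdet2] at hprod
    have he : e = d * (1 - a + d) := by exact_mod_cast hprod
    rw [← he]; exact he0
  -- a^2 ≥ 4d
  have hE3 : 4*d ≤ a^2 := by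
    set X : Matrix (Fin 2) (Fin 2) ℂ := S - ((a/2:ℝ):ℂ) • 1 with hX
    have hXh : Xᴴ = X := by
      rw [hX, Matrix.conjTranspose_sub, hS.1.eq, Matrix.conjTranspose_smul,
        Matrix.conjTranspose_one]
      congr 1
      rw [Complex.star_def, Complex.conj_ofReal]
    have hpsd := Matrix.posSemidef_conjTranspose_mul_self X
    rw [hXh] at hpsd
    have h1 := psd_trace_re_nonneg hpsd
    have htrX : X.trace = 0 := by
      rw [hX, Matrix.trace_sub, Matrix.trace_smul, Matrix.trace_one, htr]
      simp only [Fintype.card_fin, Nat.cast_ofNat, smul_eq_mul]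
      push_cast
      ring
    have hdetX : X.det = ((d - a^2/4 : ℝ):ℂ) := by
      rw [hX, det_sub_smul2, htr, hdet]
      push_cast; ring
    rw [trace_mul_self2, htrX, hdetX] at h1
    have h2 : (((0:ℂ))^2 - 2*((d - a^2/4 : ℝ):ℂ)).re = -(2*(d - a^2/4)) := by
      simp [Complex.mul_re, ← Complex.ofReal_pow]
    rw [h2] at h1
    linarith
  have h2a : a ≤ 2 := by nlinarith
  have hD1 : 0 ≤ 1 - a + d := by
    rcases eq_or_lt_of_le hd0 with h | h
    · nlinarith
    · nlinarith
  apply psd_of_herm_trace_det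
  · exact Matrix.isHermitian_one.sub hS.1
  · rw [Matrix.trace_sub, Matrix.trace_one, htr]
    simp
    linarith
  · rw [det_one_sub2, htr, hdet]
    push_cast
    simp only [Complex.add_re, Complex.sub_re, Complex.one_re, Complex.ofReal_re]
    linarith

end p4

section p5
variable {A X Y : Matrix (Fin 2) (Fin 2) ℂ}

lemma tr_two (A X Y : Matrix (Fin 2) (Fin 2) ℂ) (p q : ℝ) :
    ((A * (p • X + q • Y)).trace).re
      = p * ((A * X).trace).re + q * ((A * Y).trace).re := by
  rw [Matrix.mul_add, Matrix.trace_add, Matrix.mul_smul, Matrix.trace_smul,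
    Matrix.mul_smul, Matrix.trace_smul]
  simp [Complex.real_smul, Complex.mul_re]

lemma part2key (Q : Matrix (Fin 3) (Fin 3) ℝ) (hU : USD2 Q) (hS : SIM2 Q) :
    Q 0 0 + Q 0 1 - Q 2 1 - Q 2 2 ≤ 0 := by
  obtain ⟨hpat, -⟩ := hU
  obtain ⟨ρ, M11, M21, M31, M12, M22, hreal, hsim⟩ := hS
  obtain ⟨hstates, hM11e, hM21e, hM31e, hsum3, hM12e, hM22e, hsum2, hP⟩ := hreal
  obtain ⟨p1, p2, p3, N1, N2, N3, hp1, hp2, hp3, hpsum, hN1e, hN2e, hN3e, hd11, hd21, hd31⟩ :=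
    hsim
  obtain ⟨hQ02, hQ11, hQ12, hQ20⟩ := hpat
  set ρ0 := ρ 0 with hρ0def
  set ρ1 := ρ 1 with hρ1def
  set ρ2 := ρ 2 with hρ2def
  have hρ0p : ρ0.PosSemidef := (hstates 0).1
  have hρ1p : ρ1.PosSemidef := (hstates 1).1
  have hρ2p : ρ2.PosSemidef := (hstates 2).1
  have hρ0t : ρ0.trace = 1 := (hstates 0).2
  have hρ1t : ρ1.trace = 1 := (hstates 1).2
  have hρ2t : ρ2.trace = 1 := (hstates 2).2
  -- step 1 : ρ0 * M12 = 0
  have h1 : ρ0 * M12 = 0 := by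
    apply psd_pair_mul_eq_zero hρ0p hM12e.1
    rw [← (hP 0).2.2, hQ02]
  -- step 2 : ρ1 * (1 - M12) = 0
  have h2 : ρ1 * (1 - M12) = 0 := by
    apply psd_pair_mul_eq_zero hρ1p hM12e.2
    rw [Matrix.mul_sub, Matrix.mul_one, Matrix.trace_sub, hρ1t]
    rw [Complex.sub_re, ← (hP 1).2.2, hQ12]
    norm_num
  have h2' : ρ1 * M12 = ρ1 := by
    have := h2
    rw [Matrix.mul_sub, Matrix.mul_one, sub_eq_zero] at this
    exact this.symm
  have h2'' : M12 * ρ1 = ρ1 := by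
    have hsw := herm_mul_zero_swap hρ1p.1 (Matrix.isHermitian_one.sub hM12e.1.1) h2
    rw [Matrix.sub_mul, Matrix.one_mul, sub_eq_zero] at hsw
    exact hsw.symm
  -- step 3 : ρ0 * ρ1 = 0
  have h3 : ρ0 * ρ1 = 0 := by
    calc ρ0 * ρ1 = ρ0 * (M12 * ρ1) := by rw [h2'']
    _ = (ρ0 * M12) * ρ1 := by rw [Matrix.mul_assoc]
    _ = 0 := by rw [h1, Matrix.zero_mul]
  have h3' : ρ1 * ρ0 = 0 := herm_mul_zero_swap hρ0p.1 hρ1p.1 h3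
  -- step 4 : ρ0 + ρ1 = 1
  have h4 : ρ0 + ρ1 = 1 := by
    set σ := ρ0 + ρ1 with hσdef
    have hσtr : σ.trace = 2 := by
      rw [hσdef, Matrix.trace_add, hρ0t, hρ1t]; norm_num
    have hσherm : σ.IsHermitian := hρ0p.1.add hρ1p.1
    have hσsq : σ * σ = ρ0 * ρ0 + ρ1 * ρ1 := by
      rw [hσdef, Matrix.add_mul, Matrix.mul_add, Matrix.mul_add, h3, h3']
      abel
    obtain ⟨d0, hd00, hdet0⟩ := psd_det_real hρ0p
    obtain ⟨d1, hd10, hdet1⟩ := psd_det_real hρ1p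
    have hσdet : σ.det = 1 + (d0:ℂ) + (d1:ℂ) := by
      have e1 := trace_mul_self2 σ
      rw [hσtr, hσsq, Matrix.trace_add, trace_mul_self2, trace_mul_self2,
        hρ0t, hρ1t, hdet0, hdet1] at e1
      linear_combination (1/2 : ℂ) * e1
    have hTT : (σ - 1) * (σ - 1) = (1 - σ.det) • (1 : Matrix (Fin 2) (Fin 2) ℂ) := by
      have hc := cayley2 σ
      rw [hσtr] at hc
      calc (σ - 1) * (σ - 1) = σ * σ - σ - σ + 1 := by noncomm_ring
      _ = (2:ℂ) • σ - σ.det • 1 - σ - σ + 1 := by rw [hc]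
      _ = (1 - σ.det) • 1 := by
        rw [two_smul, sub_smul, one_smul]
        abel
    have hThm : (σ - 1)ᴴ = σ - 1 := by
      rw [Matrix.conjTranspose_sub, hσherm.eq, Matrix.conjTranspose_one]
    have hpsdT := Matrix.posSemidef_conjTranspose_mul_self (σ - 1)
    rw [hThm, hTT] at hpsdT
    have htrT := psd_trace_re_nonneg hpsdT
    rw [Matrix.trace_smul, Matrix.trace_one] at htrT
    have hre : ((1 - σ.det) • (Fintype.card (Fin 2) : ℂ)).re = 2 * (-(d0 + d1)) := by
      rw [hσdet]
      simp [Complex.mul_re]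
      ring
    rw [hre] at htrT
    have hd0z : d0 = 0 := by linarith
    have hd1z : d1 = 0 := by linarith
    have hTT0 : (σ - 1)ᴴ * (σ - 1) = 0 := by
      rw [hThm, hTT, hσdet, hd0z, hd1z]
      norm_num
    have := Matrix.conjTranspose_mul_self_eq_zero.mp hTT0
    rw [sub_eq_zero] at this
    rw [hσdef] at this
    exact this
  -- step 5 : M12 = ρ1
  have h5 : M12 = ρ1 := by
    calc M12 = (ρ0 + ρ1) * M12 := by rw [h4, Matrix.one_mul]
    _ = ρ0 * M12 + ρ1 * M12 := by rw [Matrix.add_mul]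
    _ = ρ1 := by rw [h1, h2', zero_add]
  -- ρ0 is a rank-one projection
  have hρ0sq : ρ0 * ρ0 = ρ0 := by
    have : ρ0 * (ρ0 + ρ1) = ρ0 := by rw [h4, Matrix.mul_one]
    rw [Matrix.mul_add, h3, add_zero] at this
    exact this
  have hρ0det : ρ0.det = 0 := by
    have hc := cayley2 ρ0
    rw [hρ0sq, hρ0t, one_smul] at hc
    have : ρ0.det • (1 : Matrix (Fin 2) (Fin 2) ℂ) = 0 := by
      have := sub_eq_zero.mpr hc.symm
      rw [sub_sub_cancel_left] at this
      simpa using this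
    have := congrFun (congrFun this 0) 0
    simpa [Matrix.one_apply] using this
  -- the quantity t
  set t : ℝ := ((ρ2 * ρ1).trace).re with htdef
  have ht0 : 0 ≤ t := psd_mul_trace_re_nonneg hρ2p hρ1p
  have hQ22 : Q 2 2 = t := by rw [(hP 2).2.2, h5]
  have htsum : ((ρ2 * ρ0).trace).re + t = 1 := by
    have : (ρ2 * ρ0).trace + (ρ2 * ρ1).trace = 1 := by
      rw [← Matrix.trace_add, ← Matrix.mul_add, h4, Matrix.mul_one, hρ2t]
    have := congrArg Complex.re this
    rw [Complex.add_re] at this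
    simpa using this
  -- pattern consequences with the simulability decomposition
  have hx20 : p1 * ((ρ2 * N1).trace).re = 0 ∧ p3 * ((ρ2 * N3).trace).re = 0 := by
    have h := (hP 2).1
    rw [hQ20, hd11, tr_two] at h
    have u1 := mul_nonneg hp1 (psd_mul_trace_re_nonneg hρ2p hN1e.1)
    have u3 := mul_nonneg hp3 (psd_mul_trace_re_nonneg hρ2p hN3e.1)
    constructor <;> linarith
  have hx11 : p1 * ((ρ1 * (1 - N1)).trace).re = 0 ∧ p2 * ((ρ1 * N2).trace).re = 0 := by
    have h := (hP 1).2.1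
    rw [hQ11, hd21, tr_two] at h
    have u1 := mul_nonneg hp1 (psd_mul_trace_re_nonneg hρ1p hN1e.2)
    have u2 := mul_nonneg hp2 (psd_mul_trace_re_nonneg hρ1p hN2e.1)
    constructor <;> linarith
  rcases eq_or_lt_of_le ht0 with ht | ht
  · -- case t = 0 : ρ2 = ρ0
    have hρ2ρ1 : ρ2 * ρ1 = 0 := psd_pair_mul_eq_zero hρ2p hρ1p ht.symm
    have hρ2ρ0 : ρ2 * ρ0 = ρ2 := by
      have : ρ2 * (ρ0 + ρ1) = ρ2 := by rw [h4, Matrix.mul_one]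
      rw [Matrix.mul_add, hρ2ρ1, add_zero] at this
      exact this
    have hρ0ρ2 : ρ0 * ρ2 = ρ2 := by
      have := congrArg conjTranspose hρ2ρ0
      rwa [Matrix.conjTranspose_mul, hρ0p.1.eq, hρ2p.1.eq] at this
    have hpxp := pxp hρ0det ρ2
    rw [show ρ0 * ρ2 * ρ0 = ρ0 * (ρ2 * ρ0) from Matrix.mul_assoc _ _ _, hρ2ρ0, hρ0ρ2] at hpxp
    have hρ2eq : ρ2 = ρ0 := by
      rw [hρ2t, one_smul] at hpxp
      exact hpxp
    have e1 : Q 0 0 = Q 2 0 := by rw [(hP 0).1, (hP 2).1, ← hρ2def, ← hρ0def, hρ2eq]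
    have e2 : Q 0 1 = Q 2 1 := by rw [(hP 0).2.1, (hP 2).2.1, ← hρ2def, ← hρ0def, hρ2eq]
    rw [e1, e2, hQ20, hQ22, ← ht]
    norm_num
  · -- case t > 0 : p1 = 0
    have hp1z : p1 = 0 := by
      by_contra hne
      have hp1pos : 0 < p1 := lt_of_le_of_ne hp1 (Ne.symm hne)
      have hz1 : ((ρ2 * N1).trace).re = 0 := by
        rcases mul_eq_zero.mp hx20.1 with h | h
        · exact absurd h hne
        · exact h
      have hz2 : ((ρ1 * (1 - N1)).trace).re = 0 := by
        rcases mul_eq_zero.mp hx11.1 with h | h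
        · exact absurd h hne
        · exact h
      have hm1 : ρ2 * N1 = 0 := psd_pair_mul_eq_zero hρ2p hN1e.1 hz1
      have hm2 : ρ1 * (1 - N1) = 0 := psd_pair_mul_eq_zero hρ1p hN1e.2 hz2
      have hm2' : N1 * ρ1 = ρ1 := by
        have hsw := herm_mul_zero_swap hρ1p.1 (Matrix.isHermitian_one.sub hN1e.1.1) hm2
        rw [Matrix.sub_mul, Matrix.one_mul, sub_eq_zero] at hsw
        exact hsw.symm
      have : ρ2 * ρ1 = 0 := by
        calc ρ2 * ρ1 = ρ2 * (N1 * ρ1) := by rw [hm2']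
        _ = (ρ2 * N1) * ρ1 := by rw [Matrix.mul_assoc]
        _ = 0 := by rw [hm1, Matrix.zero_mul]
      rw [htdef] at ht
      rw [this] at ht
      simp at ht
    -- bound for the N3 term
    have hb3 : p3 * ((ρ0 * N3).trace).re ≤ p3 * t := by
      rcases eq_or_lt_of_le hp3 with hp3z | hp3pos
      · rw [← hp3z]; norm_num
      · have hz3 : ((ρ2 * N3).trace).re = 0 := by
          rcases mul_eq_zero.mp hx20.2 with h | h
          · exact absurd h.symm (ne_of_lt hp3pos)
          · exact h
        have hm3 : ρ2 * N3 = 0 := psd_pair_mul_eq_zero hρ2p hN3e.1 hz3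
        have hm3' : N3 * ρ2 = 0 := herm_mul_zero_swap hρ2p.1 hN3e.1.1 hm3
        set S := N3 + ρ2 with hSdef
        have hSpsd : S.PosSemidef := hN3e.1.add hρ2p
        have hSsq : S * S = N3 * N3 + ρ2 * ρ2 := by
          rw [hSdef, Matrix.add_mul, Matrix.mul_add, Matrix.mul_add, hm3, hm3']
          abel
        have hSsub : (S - S * S).PosSemidef := by
          have e : S - S * S = (N3 - N3 * N3) + (ρ2 - ρ2 * ρ2) := by
            rw [hSsq, hSdef]; abel
          rw [e]
          exact (effect_sub_sq hN3e.1 hN3e.2).add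
            (effect_sub_sq hρ2p (state_le_one hρ2p hρ2t))
        have honeS := lemmaZ hSpsd hSsub
        have htr := psd_mul_trace_re_nonneg hρ0p honeS
        have hexp : (ρ0 * (1 - S)).trace = ρ0.trace - (ρ0 * N3).trace - (ρ0 * ρ2).trace := by
          rw [hSdef, Matrix.mul_sub, Matrix.mul_one, Matrix.mul_add, Matrix.trace_sub,
            Matrix.trace_add]
          ring
        rw [hexp, hρ0t] at htr
        simp only [Complex.sub_re, Complex.one_re] at htr
        have hcomm : ((ρ0 * ρ2).trace).re = ((ρ2 * ρ0).trace).re := by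
          rw [Matrix.trace_mul_comm]
        have : ((ρ0 * N3).trace).re ≤ t := by
          rw [hcomm] at htr
          linarith
        exact mul_le_mul_of_nonneg_left this hp3
    -- bound for the N2 term
    have hb2 : p2 * (((ρ0 * N2).trace).re - ((ρ2 * N2).trace).re) ≤ p2 * t := by
      rcases eq_or_lt_of_le hp2 with hp2z | hp2pos
      · rw [← hp2z]; norm_num
      · have hz2 : ((ρ1 * N2).trace).re = 0 := by
          rcases mul_eq_zero.mp hx11.2 with h | h
          · exact absurd h.symm (ne_of_lt hp2pos)
          · exact h
        have hm2 : ρ1 * N2 = 0 := psd_pair_mul_eq_zero hρ1p hN2e.1 hz2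
        have hm2' : N2 * ρ1 = 0 := herm_mul_zero_swap hρ1p.1 hN2e.1.1 hm2
        have hN2eq : N2 = ((ρ0 * N2).trace) • ρ0 := by
          have e0 : N2 = (ρ0 + ρ1) * N2 * (ρ0 + ρ1) := by rw [h4]; simp
          have expand : (ρ0 + ρ1) * N2 * (ρ0 + ρ1)
              = ρ0 * N2 * ρ0 + ρ0 * (N2 * ρ1) + ρ1 * N2 * ρ0 + ρ1 * N2 * ρ1 := by
            noncomm_ring
          rw [expand, hm2, hm2'] at e0
          simp only [Matrix.mul_zero, Matrix.zero_mul, add_zero, zero_add] at e0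
          exact e0.trans (pxp hρ0det N2)
        obtain h02real := psd_mul_trace_real hρ0p hN2e.1
        obtain h20real := psd_mul_trace_real hρ2p hρ0p
        set b : ℝ := ((ρ0 * N2).trace).re with hbdef
        have hb0 : 0 ≤ b := psd_mul_trace_re_nonneg hρ0p hN2e.1
        have hb1 : b ≤ 1 := by
          have := psd_mul_trace_re_nonneg hρ0p hN2e.2
          have hexp : (ρ0 * (1 - N2)).trace = ρ0.trace - (ρ0 * N2).trace := by
            rw [Matrix.mul_sub, Matrix.mul_one, Matrix.trace_sub]
          rw [hexp, hρ0t] at this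
          simp only [Complex.sub_re, Complex.one_re] at this
          linarith
        have hρ2N2 : ((ρ2 * N2).trace).re = b * ((ρ2 * ρ0).trace).re := by
          conv_lhs => rw [hN2eq]
          rw [Matrix.mul_smul, Matrix.trace_smul, smul_eq_mul]
          rw [h02real, h20real, hbdef]
          rw [← Complex.ofReal_mul]
          simp
        rw [hρ2N2]
        have : b - b * ((ρ2 * ρ0).trace).re = b * t := by
          have : ((ρ2 * ρ0).trace).re = 1 - t := by linarith
          rw [this]; ring
        rw [hbdef] at this ⊢
        rw [this]
        have : ((ρ0 * N2).trace).re * t ≤ 1 * t := by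
          apply mul_le_mul_of_nonneg_right _ ht0
          rw [← hbdef]; exact hb1
        nlinarith
    -- assemble
    have hQ00 : Q 0 0 = p3 * ((ρ0 * N3).trace).re := by
      rw [(hP 0).1, hd11, tr_two, hp1z]
      ring
    have hQ01 : Q 0 1 = p2 * ((ρ0 * N2).trace).re := by
      rw [(hP 0).2.1, hd21, tr_two, hp1z]
      ring
    have hQ21 : Q 2 1 = p2 * ((ρ2 * N2).trace).re := by
      rw [(hP 2).2.1, hd21, tr_two, hp1z]
      ring
    rw [hQ00, hQ01, hQ21, hQ22]
    have hps : p2 + p3 = 1 := by rw [hp1z] at hpsum; linarith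
    nlinarith [hb3, hb2]

end p5


/-- For every `0 < ξ < 1`, the matrix `𝒫(1/2, 1/(1+ξ), ξ)` belongs to USD₂ but not to the
convex hull of USD₂ ∩ SIM₂. -/
theorem Pmat_mem_usd2_not_mem_convexHull (ξ : ℝ) (h0 : 0 < ξ) (h1 : ξ < 1) :
    USD2 (Pmat (1/2) (1/(1+ξ)) ξ) ∧
    Pmat (1/2) (1/(1+ξ)) ξ ∉
      convexHull ℝ {Q : Matrix (Fin 3) (Fin 3) ℝ | USD2 Q ∧ SIM2 Q} := by
  have h1ξ : (0:ℝ) < 1 + ξ := by linarith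
  refine ⟨part1 ξ h0 h1, ?_⟩
  intro hmem
  have hsub : {Q : Matrix (Fin 3) (Fin 3) ℝ | USD2 Q ∧ SIM2 Q} ⊆
      {Q : Matrix (Fin 3) (Fin 3) ℝ | Q 0 0 + Q 0 1 - Q 2 1 - Q 2 2 ≤ 0} :=
    fun Q hQ => part2key Q hQ.1 hQ.2
  have hconv : Convex ℝ {Q : Matrix (Fin 3) (Fin 3) ℝ | Q 0 0 + Q 0 1 - Q 2 1 - Q 2 2 ≤ 0} := by
    intro X hX Y hY a b ha hb hab
    simp only [Set.mem_setOf_eq] at hX hY ⊢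
    simp only [Matrix.add_apply, Matrix.smul_apply, smul_eq_mul]
    nlinarith
  have h := convexHull_min hsub hconv hmem
  simp only [Set.mem_setOf_eq] at h
  have e00 : Pmat (1/2) (1/(1+ξ)) ξ 0 0 = (1/2)*ξ := by simp [Pmat]
  have e01 : Pmat (1/2) (1/(1+ξ)) ξ 0 1 = 1/(1+ξ) := by simp [Pmat]
  have e21 : Pmat (1/2) (1/(1+ξ)) ξ 2 1 = (1/(1+ξ))*(1-ξ) := by simp [Pmat]
  have e22 : Pmat (1/2) (1/(1+ξ)) ξ 2 2 = ξ := by simp [Pmat]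
  rw [e00, e01, e21, e22] at h
  have hv : (1/2)*ξ + 1/(1+ξ) - (1/(1+ξ))*(1-ξ) - ξ = ξ*(1-ξ)/(2*(1+ξ)) := by
    field_simp
    ring
  rw [hv] at h
  have : 0 < ξ*(1-ξ)/(2*(1+ξ)) := by
    apply div_pos (by nlinarith) (by linarith)
  linarith
end

section
/- Nonconvexity of USD₂: for every λ with 0 < λ < 1, the matrix D_λ = λ·𝒫(1,0,1) + (1−λ)·𝒫(1,1,0) is not equal to 𝒫(p,q,ξ) for any p,q,ξ ∈ [0,1]; consequently (by Lemma 1) D_λ ∉ USD₂, even though 𝒫(1,0,1) and 𝒫(1,1,0) both lie in USD₂. -/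
open Matrix
open scoped ComplexOrder

/-!
A qubit USD realization is rigid. Since `tr(ρ 0 M12) = 0`, the effect `M12` annihilates the nonzero
state `ρ 0` and is singular; since `tr(ρ 1 M12) = 1`, it fixes `ρ 1`, and a singular qubit effect
fixing a state is that state, so `M12 = ρ 1` is a pure state. The effect `M21` annihilates `ρ 1`, so
on a qubit it is a multiple of the complementary projection `1 - ρ 1`. Reading off the correlations
gives `P 2 1 = P 0 1 * (1 - P 2 2)` (indices from 0) for every `P ∈ USD₂`, an identity that every
`𝒫(p,q,ξ)` satisfies as well, but that `D_λ` violates: there it reads `1 - λ = (1 - λ)²`.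
-/

namespace Matrix

lemma det_eq_zero_of_mul_eq_zero {n K : Type*} [Fintype n] [DecidableEq n] [Field K]
    {A B : Matrix n n K} (hA : A ≠ 0) (h : A * B = 0) : B.det = 0 := by
  by_contra hB
  have hA' := mul_nonsing_inv_cancel_right (A := B) A (Ne.isUnit hB)
  rw [h, Matrix.zero_mul] at hA'
  exact hA hA'.symm

section FinTwo

variable {R : Type*} [CommRing R]

lemma det_one_sub_fin_two (A : Matrix (Fin 2) (Fin 2) R) :
    (1 - A).det = 1 - A.trace + A.det := by
  rw [det_fin_two, det_fin_two, trace_fin_two]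
  simp only [sub_apply, one_apply_eq, one_apply_ne zero_ne_one, one_apply_ne one_ne_zero]
  ring

lemma mul_mul_eq_trace_mul_smul_of_det_eq_zero {P : Matrix (Fin 2) (Fin 2) R} (hP : P.det = 0)
    (X : Matrix (Fin 2) (Fin 2) R) :
    P * X * P = (P * X).trace • P := by
  rw [det_fin_two] at hP
  ext i j
  fin_cases i <;> fin_cases j <;>
    simp only [mul_apply, Fin.sum_univ_two, trace_fin_two, smul_apply, smul_eq_mul,
      Fin.zero_eta, Fin.mk_one]
  · linear_combination -X 1 1 * hP
  · linear_combination X 0 1 * hP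
  · linear_combination X 1 0 * hP
  · linear_combination -X 0 0 * hP

lemma eq_trace_smul_one_sub_of_mul_eq_zero {P F : Matrix (Fin 2) (Fin 2) R}
    (hP : (1 - P).det = 0) (hPF : P * F = 0) (hFP : F * P = 0) : F = F.trace • (1 - P) :=
  calc F = (1 - P) * F * (1 - P) := by
        rw [sub_mul, one_mul, hPF, sub_zero, mul_sub, mul_one, hFP, sub_zero]
    _ = F.trace • (1 - P) := by
        rw [mul_mul_eq_trace_mul_smul_of_det_eq_zero hP, sub_mul, one_mul, hPF, sub_zero]

end FinTwo

open scoped MatrixOrder in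
theorem PosSemidef.mul_eq_zero_of_re_trace_mul_eq_zero {n : Type*} [Fintype n]
    {A B : Matrix n n ℂ} (hA : A.PosSemidef) (hB : B.PosSemidef)
    (h : (A * B).trace.re = 0) : A * B = 0 := by
  classical
  obtain ⟨X, rfl⟩ := CStarAlgebra.nonneg_iff_eq_star_mul_self.mp hA.nonneg
  obtain ⟨Y, rfl⟩ := CStarAlgebra.nonneg_iff_eq_star_mul_self.mp hB.nonneg
  simp only [star_eq_conjTranspose] at *
  -- `tr(XᴴX YᴴY) = tr(C Cᴴ)` with `C = X Yᴴ`, a trace that vanishes only for `C = 0`.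
  have htr : (Xᴴ * X * (Yᴴ * Y)).trace = (X * Yᴴ * (X * Yᴴ)ᴴ).trace := by
    rw [conjTranspose_mul, conjTranspose_conjTranspose, Matrix.mul_assoc, trace_mul_comm]
    simp only [Matrix.mul_assoc]
  have hC : X * Yᴴ = 0 := by
    have him := (Complex.nonneg_iff.mp (posSemidef_self_mul_conjTranspose (X * Yᴴ)).trace_nonneg).2
    rw [← htr] at him
    rw [← trace_mul_conjTranspose_self_eq_zero_iff, ← htr]
    exact Complex.ext h him.symm
  calc Xᴴ * X * (Yᴴ * Y) = Xᴴ * (X * Yᴴ) * Y := by simp only [Matrix.mul_assoc]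
    _ = 0 := by rw [hC, Matrix.mul_zero, Matrix.zero_mul]

end Matrix

lemma QubitState.ne_zero {ρ : Matrix (Fin 2) (Fin 2) ℂ} (hρ : QubitState ρ) : ρ ≠ 0 := by
  rintro rfl
  simpa using hρ.2

lemma QubitEffect.eq_of_det_eq_zero_of_re_trace_mul_eq_one {ρ E : Matrix (Fin 2) (Fin 2) ℂ}
    (hρ : QubitState ρ) (hE : QubitEffect E) (hdet : E.det = 0)
    (h : (ρ * E).trace.re = 1) : E = ρ := by
  have hρE : ρ * E = ρ := by
    have := hρ.1.mul_eq_zero_of_re_trace_mul_eq_zero hE.2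
      (by rw [mul_sub, mul_one, trace_sub, hρ.2, Complex.sub_re, h]; simp)
    rwa [mul_sub, mul_one, sub_eq_zero, eq_comm] at this
  have hEρ : E * ρ = ρ := by
    simpa [hρ.1.1.eq, hE.1.1.eq] using congrArg conjTranspose hρE
  calc E = (ρ * E).trace • E := by rw [hρE, hρ.2, one_smul]
    _ = E * ρ * E := by rw [mul_mul_eq_trace_mul_smul_of_det_eq_zero hdet, trace_mul_comm]
    _ = ρ := by rw [hEρ, hρE]

theorem USD2.apply_two_one {P : Matrix (Fin 3) (Fin 3) ℝ} (hP : USD2 P) :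
    P 2 1 = P 0 1 * (1 - P 2 2) := by
  obtain ⟨⟨hP02, hP11, hP12, -⟩, ρ, _, M21, _, M12, _, hρ, -, hM21, -, -, hM12, -, -, hP⟩ := hP
  obtain ⟨-, h01, h02⟩ := hP 0
  obtain ⟨-, h11, h12⟩ := hP 1
  obtain ⟨-, h21, h22⟩ := hP 2
  have hρ₀M12 : ρ 0 * M12 = 0 :=
    (hρ 0).1.mul_eq_zero_of_re_trace_mul_eq_zero hM12.1 (h02 ▸ hP02)
  have hdet : M12.det = 0 := det_eq_zero_of_mul_eq_zero (hρ 0).ne_zero hρ₀M12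
  obtain rfl : M12 = ρ 1 :=
    hM12.eq_of_det_eq_zero_of_re_trace_mul_eq_one (hρ 1) hdet (h12 ▸ hP12)
  have hρ₁M21 : ρ 1 * M21 = 0 :=
    (hρ 1).1.mul_eq_zero_of_re_trace_mul_eq_zero hM21.1 (h11 ▸ hP11)
  have hM21ρ₁ : M21 * ρ 1 = 0 := by
    simpa [(hρ 1).1.1.eq, hM21.1.1.eq] using congrArg conjTranspose hρ₁M21
  have hF : M21 = M21.trace • (1 - ρ 1) := eq_trace_smul_one_sub_of_mul_eq_zero
    (by rw [det_one_sub_fin_two, (hρ 1).2, hdet]; ring) hρ₁M21 hM21ρ₁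
  have him : M21.trace.im = 0 := (Complex.nonneg_iff.mp hM21.1.trace_nonneg).2.symm
  rw [h01, h21, h22, hF]
  simp [mul_sub, trace_sub, hρ₀M12, (hρ 0).2, (hρ 2).2, Complex.mul_re, him]

noncomputable def basisProj (i : Fin 2) : Matrix (Fin 2) (Fin 2) ℂ := diagonal (Pi.single i 1)

lemma posSemidef_basisProj (i : Fin 2) : (basisProj i).PosSemidef :=
  posSemidef_diagonal_iff.2 fun j => by
    rw [Pi.single_apply]; split_ifs <;> simp

lemma one_sub_basisProj (i : Fin 2) : 1 - basisProj i = basisProj (1 - i) := by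
  fin_cases i <;> ext j k <;> fin_cases j <;> fin_cases k <;> simp [basisProj, one_apply]

lemma basisProj_zero_add_basisProj_one : basisProj 0 + basisProj 1 = 1 := by
  ext j k; fin_cases j <;> fin_cases k <;> simp [basisProj, one_apply]

lemma qubitState_basisProj (i : Fin 2) : QubitState (basisProj i) :=
  ⟨posSemidef_basisProj i, by simp [basisProj, trace_diagonal]⟩

lemma qubitEffect_basisProj (i : Fin 2) : QubitEffect (basisProj i) :=
  ⟨posSemidef_basisProj i, one_sub_basisProj i ▸ posSemidef_basisProj _⟩

lemma qubitEffect_zero : QubitEffect 0 :=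
  ⟨PosSemidef.zero, by simpa using PosSemidef.one⟩

lemma trace_basisProj_mul_basisProj (i j : Fin 2) :
    (basisProj i * basisProj j).trace = if i = j then 1 else 0 := by
  fin_cases i <;> fin_cases j <;> simp [basisProj]

lemma usd2_pmat_one_zero_one : USD2 (Pmat 1 0 1) := by
  refine ⟨by simp [USDpattern, Pmat], ![basisProj 0, basisProj 1, basisProj 1],
    basisProj 0, 0, basisProj 1, basisProj 1, basisProj 0,
    fun x => by fin_cases x <;> exact qubitState_basisProj _, qubitEffect_basisProj 0,
    qubitEffect_zero, qubitEffect_basisProj 1, ?_, qubitEffect_basisProj 1,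
    qubitEffect_basisProj 0, ?_, fun x => ?_⟩
  · rw [add_zero, basisProj_zero_add_basisProj_one]
  · rw [add_comm, basisProj_zero_add_basisProj_one]
  · fin_cases x <;> simp [Pmat, trace_basisProj_mul_basisProj]

lemma usd2_pmat_one_one_zero : USD2 (Pmat 1 1 0) := by
  refine ⟨by simp [USDpattern, Pmat], ![basisProj 0, basisProj 1, basisProj 0],
    basisProj 1, basisProj 0, 0, basisProj 1, basisProj 0,
    fun x => by fin_cases x <;> exact qubitState_basisProj _, qubitEffect_basisProj 1,
    qubitEffect_basisProj 0, qubitEffect_zero, ?_, qubitEffect_basisProj 1,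
    qubitEffect_basisProj 0, ?_, fun x => ?_⟩
  · rw [add_zero, add_comm, basisProj_zero_add_basisProj_one]
  · rw [add_comm, basisProj_zero_add_basisProj_one]
  · fin_cases x <;> simp [Pmat, trace_basisProj_mul_basisProj]

lemma pmat_apply_two_one (p q ξ : ℝ) :
    Pmat p q ξ 2 1 = Pmat p q ξ 0 1 * (1 - Pmat p q ξ 2 2) := by
  simp [Pmat]

lemma mixture_apply_two_one_ne {lam : ℝ} (h0 : 0 < lam) (h1 : lam < 1)
    {P : Matrix (Fin 3) (Fin 3) ℝ} (hP : P = lam • Pmat 1 0 1 + (1 - lam) • Pmat 1 1 0) :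
    P 2 1 ≠ P 0 1 * (1 - P 2 2) := by
  obtain ⟨h01, h21, h22⟩ : P 0 1 = 1 - lam ∧ P 2 1 = 1 - lam ∧ P 2 2 = lam := by
    simp [hP, Pmat]
  rw [h01, h21, h22]
  intro h
  nlinarith

/-- Nonconvexity of USD₂: for `0 < λ < 1`, the mixture `D_λ = λ 𝒫(1,0,1) + (1-λ) 𝒫(1,1,0)` is
not of the form `𝒫(p,q,ξ)` for any `p, q, ξ ∈ [0,1]`, hence `D_λ ∉ USD₂`, even though
`𝒫(1,0,1)` and `𝒫(1,1,0)` both lie in USD₂. -/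
theorem usd2_not_convex (lam : ℝ) (h0 : 0 < lam) (h1 : lam < 1) :
    USD2 (Pmat 1 0 1) ∧ USD2 (Pmat 1 1 0) ∧
    (∀ p q ξ : ℝ, p ∈ Set.Icc (0 : ℝ) 1 → q ∈ Set.Icc (0 : ℝ) 1 → ξ ∈ Set.Icc (0 : ℝ) 1 →
      lam • Pmat 1 0 1 + (1 - lam) • Pmat 1 1 0 ≠ Pmat p q ξ) ∧
    ¬ USD2 (lam • Pmat 1 0 1 + (1 - lam) • Pmat 1 1 0) := by
  refine ⟨usd2_pmat_one_zero_one, usd2_pmat_one_one_zero, fun p q ξ _ _ _ h => ?_, fun h => ?_⟩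
  · exact mixture_apply_two_one_ne h0 h1 h.symm (pmat_apply_two_one p q ξ)
  · exact mixture_apply_two_one_ne h0 h1 rfl h.apply_two_one
end

section
/- Let Π_φ and Π_η be rank-one orthogonal projections on ℂ² (2×2 complex matrices with Π² = Π = Π† and trace 1), let p, q ∈ [0,1], let F₁, F₂, F₃ be qubit effects, and let κ₁, κ₂, κ₃ ≥ 0 with κ₁ + κ₂ + κ₃ = 1. If p(1 − Π_η) = κ₁F₁ + κ₃(1 − F₃) and q(1 − Π_φ) = κ₁(1 − F₁) + κ₂F₂ and κ₁ ≠ 0, then Π_η = 1 − Π_φ (equivalently tr(Π_φ Π_η) = 0). -/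
open Matrix
open scoped ComplexOrder

/-!
Compressing `p • (1 - Π_η) = κ₁ • F₁ + κ₃ • (1 - F₃)` by `Π_η` kills the left side, and a sum of
two positive semidefinite matrices vanishes only if both do; hence `Π_η F₁ Π_η = 0`, which for
`F₁ ≥ 0` forces `F₁ Π_η = 0`. The second equation gives `(1 - F₁) Π_φ = 0` in the same way, so
`Π_η Π_φ = Π_η F₁ Π_φ = 0`. Then `1 - Π_φ - Π_η` is an orthogonal projection of trace `0`,
hence zero.
-/

open scoped MatrixOrder

theorem mul_eq_zero_of_mul_eq_zero_of_one_sub_mul_eq_zero {R : Type*} [Ring R] [StarRing R]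
    {F P Q : R} (hF : IsSelfAdjoint F) (hP : IsSelfAdjoint P) (hFP : F * P = 0)
    (hFQ : (1 - F) * Q = 0) : P * Q = 0 := by
  have hPF : P * F = 0 := by simpa [hF.star_eq, hP.star_eq] using congr(star $hFP)
  rw [sub_mul, one_mul, sub_eq_zero] at hFQ
  rw [hFQ, ← mul_assoc, hPF, zero_mul]

namespace Matrix

variable {m n 𝕜 : Type*} [Fintype n] [RCLike 𝕜]

theorem PosSemidef.mul_eq_zero_of_conjTranspose_mul_mul_eq_zero [Fintype m] {S : Matrix n n 𝕜}
    {P : Matrix n m 𝕜} (hS : S.PosSemidef) (h : Pᴴ * S * P = 0) : S * P = 0 := by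
  classical
  obtain ⟨B, rfl⟩ : ∃ B, S = Bᴴ * B := CStarAlgebra.nonneg_iff_eq_star_mul_self.mp hS.nonneg
  rw [conjTranspose_mul_self_mul_eq_zero, ← conjTranspose_mul_self_eq_zero, conjTranspose_mul]
  simpa only [Matrix.mul_assoc] using h

theorem mul_eq_zero_of_add_eq_smul_one_sub [DecidableEq n] {P F G : Matrix n n 𝕜}
    (hP : IsStarProjection P) (hF : F.PosSemidef) (hG : G.PosSemidef) {c : ℝ}
    (h : F + G = c • (1 - P)) : F * P = 0 := by
  have hPH : Pᴴ = P := hP.isSelfAdjoint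
  have hcompress : Pᴴ * F * P + Pᴴ * G * P = 0 := by
    rw [← Matrix.add_mul, ← Matrix.mul_add, h, hPH, Matrix.mul_smul, hP.mul_one_sub_self,
      smul_zero, Matrix.zero_mul]
  have hPFP := (add_eq_zero_iff_of_nonneg (hF.conjTranspose_mul_mul_same P).nonneg
    (hG.conjTranspose_mul_mul_same P).nonneg).mp hcompress
  exact hF.mul_eq_zero_of_conjTranspose_mul_mul_eq_zero hPFP.1

theorem eq_one_sub_of_mul_eq_zero [DecidableEq n] {P Q : Matrix n n 𝕜}
    (hP : IsStarProjection P) (hQ : IsStarProjection Q) (hPQ : P * Q = 0)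
    (htr : P.trace + Q.trace = Fintype.card n) : P = 1 - Q := by
  have hproj : IsStarProjection (1 - (P + Q)) := (hP.add hQ hPQ).one_sub
  have htr0 : (1 - (P + Q)).trace = 0 := by
    rw [trace_sub, trace_add, trace_one, htr, sub_self]
  have hzero := (nonneg_iff_posSemidef.mp hproj.nonneg).trace_eq_zero_iff.mp htr0
  rw [sub_eq_zero] at hzero
  rw [eq_sub_iff_add_eq, hzero]

end Matrix

theorem kappa1_ne_zero_forces_orthogonal_general
    (Pphi Peta : Matrix (Fin 2) (Fin 2) ℂ)
    (hPphi : Pphi * Pphi = Pphi) (hPphiH : Pphiᴴ = Pphi) (hPphit : Pphi.trace = 1)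
    (hPeta : Peta * Peta = Peta) (hPetaH : Petaᴴ = Peta) (hPetat : Peta.trace = 1)
    (p q : ℝ)
    (F1 F2 F3 : Matrix (Fin 2) (Fin 2) ℂ)
    (hF1 : QubitEffect F1) (hF2 : QubitEffect F2) (hF3 : QubitEffect F3)
    (κ1 κ2 κ3 : ℝ) (hκ1 : 0 ≤ κ1) (hκ2 : 0 ≤ κ2) (hκ3 : 0 ≤ κ3)
    (heq1 : p • ((1 : Matrix (Fin 2) (Fin 2) ℂ) - Peta) = κ1 • F1 + κ3 • (1 - F3))
    (heq2 : q • ((1 : Matrix (Fin 2) (Fin 2) ℂ) - Pphi) = κ1 • (1 - F1) + κ2 • F2)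
    (hκ1ne : κ1 ≠ 0) :
    Peta = 1 - Pphi := by
  have hη : IsStarProjection Peta := ⟨hPeta, hPetaH⟩
  have hφ : IsStarProjection Pphi := ⟨hPphi, hPphiH⟩
  have hF1η : F1 * Peta = 0 := by
    have := mul_eq_zero_of_add_eq_smul_one_sub hη (hF1.1.smul hκ1) (hF3.2.smul hκ3) heq1.symm
    rwa [smul_mul_assoc, smul_eq_zero_iff_right hκ1ne] at this
  have hF1φ : (1 - F1) * Pphi = 0 := by
    have := mul_eq_zero_of_add_eq_smul_one_sub hφ (hF1.2.smul hκ1) (hF2.1.smul hκ2) heq2.symm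
    rwa [smul_mul_assoc, smul_eq_zero_iff_right hκ1ne] at this
  have hηφ : Peta * Pphi = 0 :=
    mul_eq_zero_of_mul_eq_zero_of_one_sub_mul_eq_zero hF1.1.isHermitian hη.isSelfAdjoint
      hF1η hF1φ
  exact eq_one_sub_of_mul_eq_zero hη hφ hηφ (by rw [hPetat, hPphit]; norm_num)

/-- Key step in the proof of Theorem 1: if `κ₁ ≠ 0` in the simulation equations
`p(1 - Π_η) = κ₁ F₁ + κ₃(1 - F₃)` and `q(1 - Π_φ) = κ₁(1 - F₁) + κ₂ F₂`,
then `Π_η = 1 - Π_φ`. -/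
theorem kappa1_ne_zero_forces_orthogonal
    (Pphi Peta : Matrix (Fin 2) (Fin 2) ℂ)
    (hPphi : Pphi * Pphi = Pphi) (hPphiH : Pphiᴴ = Pphi) (hPphit : Pphi.trace = 1)
    (hPeta : Peta * Peta = Peta) (hPetaH : Petaᴴ = Peta) (hPetat : Peta.trace = 1)
    (p q : ℝ) (hp : p ∈ Set.Icc (0 : ℝ) 1) (hq : q ∈ Set.Icc (0 : ℝ) 1)
    (F1 F2 F3 : Matrix (Fin 2) (Fin 2) ℂ)
    (hF1 : QubitEffect F1) (hF2 : QubitEffect F2) (hF3 : QubitEffect F3)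
    (κ1 κ2 κ3 : ℝ) (hκ1 : 0 ≤ κ1) (hκ2 : 0 ≤ κ2) (hκ3 : 0 ≤ κ3)
    (hκsum : κ1 + κ2 + κ3 = 1)
    (heq1 : p • ((1 : Matrix (Fin 2) (Fin 2) ℂ) - Peta) = κ1 • F1 + κ3 • (1 - F3))
    (heq2 : q • ((1 : Matrix (Fin 2) (Fin 2) ℂ) - Pphi) = κ1 • (1 - F1) + κ2 • F2)
    (hκ1ne : κ1 ≠ 0) :
    Peta = 1 - Pphi :=
  kappa1_ne_zero_forces_orthogonal_general Pphi Peta hPphi hPphiH hPphit hPeta hPetaH hPetat p q F1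
    F2 F3 hF1 hF2 hF3 κ1 κ2 κ3 hκ1 hκ2 hκ3 heq1 heq2 hκ1ne
end

section
/- Positivity criterion for the third USD effect: let P₁ and P₂ be rank-one orthogonal projections on ℂ² (2×2 complex matrices with P² = P = P† and trace 1) and let p, q ∈ [0,1]. Then the matrix 1 − p·P₁ − q·P₂ is positive semidefinite if and only if (1−p)(1−q) ≥ p·q·Re tr(P₁P₂). -/
open Matrix
open scoped ComplexOrder

/-!
For a Hermitian 2×2 matrix, positive semidefiniteness means that both eigenvalues are
nonnegative, i.e. that their sum (the trace) and their product (the determinant) are. The trace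
of `1 - p P₁ - q P₂` is `2 - p - q ≥ 0`. For the determinant, the 2×2 polarization identity
`det (A + B) = det A + det B + tr A tr B - tr (A B)`, together with `det P = 0` for an idempotent
of trace one, gives `det (1 - p P₁ - q P₂) = (1 - p)(1 - q) - p q tr (P₁ P₂)`.
-/

theorem nonneg_and_nonneg_iff_add_nonneg_and_mul_nonneg {α : Type*} [CommRing α] [LinearOrder α]
    [IsStrictOrderedRing α] {a b : α} : 0 ≤ a ∧ 0 ≤ b ↔ 0 ≤ a + b ∧ 0 ≤ a * b := by
  constructor
  · rintro ⟨ha, hb⟩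
    exact ⟨add_nonneg ha hb, mul_nonneg ha hb⟩
  · rintro ⟨hsum, hprod⟩
    rcases mul_nonneg_iff.mp hprod with h | ⟨ha, hb⟩
    · exact h
    · exact ⟨by linarith, by linarith⟩

namespace Matrix

section CommRing

variable {R : Type*} [CommRing R]

theorem det_add_fin_two (A B : Matrix (Fin 2) (Fin 2) R) :
    (A + B).det = A.det + B.det + A.trace * B.trace - (A * B).trace := by
  simp only [det_fin_two, trace_fin_two, add_apply, mul_apply, Fin.sum_univ_two]
  ring

theorem det_eq_zero_of_isIdempotentElem_of_trace_eq_one {P : Matrix (Fin 2) (Fin 2) R}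
    (hP : IsIdempotentElem P) (hPt : P.trace = 1) : P.det = 0 := by
  have h00 : P 0 0 * P 0 0 + P 0 1 * P 1 0 = P 0 0 := by
    simpa [mul_apply, Fin.sum_univ_two] using congrFun (congrFun hP 0) 0
  rw [trace_fin_two] at hPt
  rw [det_fin_two]
  linear_combination P 0 0 * hPt - h00

theorem det_one_sub_smul_sub_smul_of_isIdempotentElem {P Q : Matrix (Fin 2) (Fin 2) R}
    (hP : IsIdempotentElem P) (hQ : IsIdempotentElem Q) (hPt : P.trace = 1) (hQt : Q.trace = 1)
    (a b : R) :
    (1 - a • P - b • Q).det = (1 - a) * (1 - b) - a * b * (P * Q).trace := by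
  rw [sub_sub, sub_eq_add_neg, det_add_fin_two, neg_add, det_add_fin_two]
  simp [det_neg, det_eq_zero_of_isIdempotentElem_of_trace_eq_one hP hPt,
    det_eq_zero_of_isIdempotentElem_of_trace_eq_one hQ hQt, hPt, hQt]
  ring

end CommRing

theorem IsHermitian.posSemidef_iff_re_trace_nonneg_and_re_det_nonneg {𝕜 : Type*} [RCLike 𝕜]
    {A : Matrix (Fin 2) (Fin 2) 𝕜} (hA : A.IsHermitian) :
    A.PosSemidef ↔ 0 ≤ RCLike.re A.trace ∧ 0 ≤ RCLike.re A.det := by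
  rw [hA.posSemidef_iff_eigenvalues_nonneg, hA.trace_eq_sum_eigenvalues,
    hA.det_eq_prod_eigenvalues]
  simp only [Pi.le_def, Fin.forall_fin_two, Fin.sum_univ_two, Fin.prod_univ_two, Pi.zero_apply]
  norm_cast
  exact nonneg_and_nonneg_iff_add_nonneg_and_mul_nonneg

end Matrix

/-- Positivity criterion for the third USD effect: for rank-one projections `P₁, P₂` on ℂ²
and `p, q ∈ [0,1]`, the matrix `1 - p P₁ - q P₂` is positive semidefinite iff
`(1-p)(1-q) ≥ p q Re tr(P₁ P₂)`. -/
theorem third_effect_posSemidef_iff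
    (P1 P2 : Matrix (Fin 2) (Fin 2) ℂ)
    (hP1 : P1 * P1 = P1) (hP1H : P1ᴴ = P1) (hP1t : P1.trace = 1)
    (hP2 : P2 * P2 = P2) (hP2H : P2ᴴ = P2) (hP2t : P2.trace = 1)
    (p q : ℝ) (hp : p ∈ Set.Icc (0 : ℝ) 1) (hq : q ∈ Set.Icc (0 : ℝ) 1) :
    ((1 : Matrix (Fin 2) (Fin 2) ℂ) - p • P1 - q • P2).PosSemidef ↔
      (1 - p) * (1 - q) ≥ p * q * ((P1 * P2).trace).re := by
  have hM : ((1 : Matrix (Fin 2) (Fin 2) ℂ) - p • P1 - q • P2).IsHermitian :=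
    (isHermitian_one.sub (IsHermitian.smul hP1H (.all p))).sub (IsHermitian.smul hP2H (.all q))
  have htrace : ((1 : Matrix (Fin 2) (Fin 2) ℂ) - p • P1 - q • P2).trace = 2 - p - q := by
    simp [trace_sub, trace_smul, hP1t, hP2t]
  rw [hM.posSemidef_iff_re_trace_nonneg_and_re_det_nonneg, htrace, ← Complex.coe_smul,
    ← Complex.coe_smul, det_one_sub_smul_sub_smul_of_isIdempotentElem hP1 hP2 hP1t hP2t]
  have hpq : q ≤ 2 - p := by linarith [hp.2, hq.2]
  simp [hpq]
end

section
/- Appendix C, Corollary 2(i): let F be a qubit effect with Bloch vector y⃗ and y₀ = Re tr F, and let ρ be a qubit state with Bloch vector r⃗. If Re tr(Fρ) ≥ 1 − ε and y₀ ≤ 1 + ε for some ε ≥ 0, then the Euclidean norm ‖y⃗ − r⃗‖ ≤ √(4ε + ε²). -/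
open Matrix
open scoped ComplexOrder

/-- The three Pauli matrices. -/
noncomputable def pauli : Fin 3 → Matrix (Fin 2) (Fin 2) ℂ :=
  ![!![0, 1; 1, 0], !![0, -Complex.I; Complex.I, 0], !![1, 0; 0, -1]]

/-- The Bloch vector of a 2×2 complex matrix: `(Re tr(A σ₁), Re tr(A σ₂), Re tr(A σ₃))`. -/
noncomputable def bloch (A : Matrix (Fin 2) (Fin 2) ℂ) : Fin 3 → ℝ :=
  fun i => ((A * pauli i).trace).re

/-!
Write `F = ½(y₀ + y⃗·σ⃗)` and `ρ = ½(1 + r⃗·σ⃗)`. Then `Re tr(Fρ) = ½(y₀ + y⃗·r⃗)`, and for a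
2×2 Hermitian matrix positivity is `‖a⃗‖ ≤ a₀` (the determinant condition), so `‖r⃗‖ ≤ 1` and,
applied to `F` and `1 - F`, `‖y⃗‖ ≤ min(y₀, 2 - y₀)`. Hence
`‖y⃗ - r⃗‖² = ‖y⃗‖² + ‖r⃗‖² - 2 y⃗·r⃗ ≤ (2 - y₀)² + 1 - 2(2 - 2ε - y₀) = (y₀ - 1)² + 4ε`,
and Cauchy–Schwarz, `y⃗·r⃗ ≤ ‖y⃗‖ ≤ y₀`, gives `1 - ε ≤ y₀ ≤ 1 + ε`.
-/

theorem norm_sub_sq_le_of_half_add_inner_ge {E : Type*} [NormedAddCommGroup E]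
    [InnerProductSpace ℝ E] {y r : E} {y₀ ε : ℝ} (hy : ‖y‖ ≤ y₀) (hy' : ‖y‖ ≤ 2 - y₀)
    (hr : ‖r‖ ≤ 1) (hprob : 1 - ε ≤ (y₀ + inner ℝ y r) / 2) (hy0 : y₀ ≤ 1 + ε) :
    ‖y - r‖ ^ 2 ≤ 4 * ε + ε ^ 2 := by
  have hinner : inner ℝ y r ≤ ‖y‖ :=
    (real_inner_le_norm y r).trans (mul_le_of_le_one_right (norm_nonneg y) hr)
  have hy0_ge : 1 - ε ≤ y₀ := by linarith
  calc ‖y - r‖ ^ 2 = ‖y‖ ^ 2 - 2 * inner ℝ y r + ‖r‖ ^ 2 := norm_sub_sq_real y r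
    _ ≤ (2 - y₀) ^ 2 - 2 * (2 - 2 * ε - y₀) + 1 := by
      have hy_sq : ‖y‖ ^ 2 ≤ (2 - y₀) ^ 2 := pow_le_pow_left₀ (norm_nonneg y) hy' 2
      have hr_sq : ‖r‖ ^ 2 ≤ 1 := pow_le_one₀ (norm_nonneg r) hr
      linarith
    _ = (y₀ - 1) ^ 2 + 4 * ε := by ring
    _ ≤ 4 * ε + ε ^ 2 := by
      have : (y₀ - 1) ^ 2 ≤ ε ^ 2 := sq_le_sq' (by linarith) (by linarith)
      linarith

theorem Matrix.IsHermitian.exists_eq_fin_two {A : Matrix (Fin 2) (Fin 2) ℂ}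
    (hA : A.IsHermitian) : ∃ (a d : ℝ) (b : ℂ), A = !![(a : ℂ), b; star b, d] := by
  refine ⟨(A 0 0).re, (A 1 1).re, A 0 1, ?_⟩
  ext i j
  fin_cases i <;> fin_cases j
  · exact (hA.coe_re_apply_self 0).symm
  · rfl
  · exact (hA.apply 1 0).symm
  · exact (hA.coe_re_apply_self 1).symm

noncomputable def blochVec (A : Matrix (Fin 2) (Fin 2) ℂ) : EuclideanSpace ℝ (Fin 3) :=
  WithLp.toLp 2 (bloch A)

theorem blochVec_fin_two (a d : ℝ) (b : ℂ) :
    blochVec !![(a : ℂ), b; star b, d] = !₂[2 * b.re, -2 * b.im, a - d] := by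
  ext i
  fin_cases i <;> simp [blochVec, bloch, pauli, Matrix.trace_fin_two] <;> ring

theorem sum_bloch_sub_sq_eq_norm_sq (A B : Matrix (Fin 2) (Fin 2) ℂ) :
    ∑ i, (bloch A i - bloch B i) ^ 2 = ‖blochVec A - blochVec B‖ ^ 2 := by
  simp [EuclideanSpace.real_norm_sq_eq, blochVec]

theorem re_trace_mul_eq_of_isHermitian {A B : Matrix (Fin 2) (Fin 2) ℂ}
    (hA : A.IsHermitian) (hB : B.IsHermitian) :
    (A * B).trace.re = (A.trace.re * B.trace.re + inner ℝ (blochVec A) (blochVec B)) / 2 := by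
  obtain ⟨a, d, b, rfl⟩ := hA.exists_eq_fin_two
  obtain ⟨a', d', b', rfl⟩ := hB.exists_eq_fin_two
  rw [blochVec_fin_two, blochVec_fin_two]
  simp [Matrix.trace_fin_two, PiLp.inner_apply, Fin.sum_univ_three]
  ring

theorem Matrix.PosSemidef.norm_blochVec_le {A : Matrix (Fin 2) (Fin 2) ℂ}
    (hA : A.PosSemidef) : ‖blochVec A‖ ≤ A.trace.re := by
  obtain ⟨a, d, b, rfl⟩ := hA.isHermitian.exists_eq_fin_two
  have ha : 0 ≤ a := by simpa using hA.diag_nonneg (i := 0)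
  have hd : 0 ≤ d := by simpa using hA.diag_nonneg (i := 1)
  have hdet : Complex.normSq b ≤ a * d := by
    have := hA.det_nonneg
    rw [Matrix.det_fin_two_of, Complex.star_def, Complex.mul_conj] at this
    exact_mod_cast sub_nonneg.mp this
  rw [blochVec_fin_two, EuclideanSpace.norm_eq,
    Real.sqrt_le_left (by simpa using add_nonneg ha hd)]
  simp [Fin.sum_univ_three, Matrix.trace_fin_two, Complex.normSq_apply] at hdet ⊢
  nlinarith

theorem blochVec_one_sub (A : Matrix (Fin 2) (Fin 2) ℂ) :
    blochVec (1 - A) = -blochVec A := by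
  ext i
  fin_cases i <;> simp [blochVec, bloch, pauli, Matrix.trace_fin_two, Matrix.sub_mul]

theorem re_trace_one_sub {n : Type*} [Fintype n] [DecidableEq n] (A : Matrix n n ℂ) :
    (1 - A).trace.re = Fintype.card n - A.trace.re := by
  simp [Matrix.trace_sub]

theorem bloch_close_of_high_prob_general (F ρ : Matrix (Fin 2) (Fin 2) ℂ)
    (hF : QubitEffect F) (hρ : QubitState ρ) (ε : ℝ)
    (hprob : ((F * ρ).trace).re ≥ 1 - ε) (hy0 : (F.trace).re ≤ 1 + ε) :
    Real.sqrt (∑ i, (bloch F i - bloch ρ i) ^ 2) ≤ Real.sqrt (4 * ε + ε ^ 2) := by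
  have hρ_tr : ρ.trace.re = 1 := by simp [hρ.2]
  have hF_le : ‖blochVec F‖ ≤ F.trace.re := hF.1.norm_blochVec_le
  have hF_le' : ‖blochVec F‖ ≤ 2 - F.trace.re := by
    simpa [blochVec_one_sub, re_trace_one_sub] using hF.2.norm_blochVec_le
  have hρ_le : ‖blochVec ρ‖ ≤ 1 := hρ_tr ▸ hρ.1.norm_blochVec_le
  rw [re_trace_mul_eq_of_isHermitian hF.1.isHermitian hρ.1.isHermitian, hρ_tr, mul_one] at hprob
  rw [sum_bloch_sub_sq_eq_norm_sq]
  exact Real.sqrt_le_sqrt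
    (norm_sub_sq_le_of_half_add_inner_ge hF_le hF_le' hρ_le hprob hy0)

/-- Appendix C, Corollary 2(i): if `Re tr(Fρ) ≥ 1 - ε` and `Re tr F ≤ 1 + ε`, then the
Euclidean distance of the Bloch vectors of `F` and `ρ` is at most `√(4ε + ε²)`. -/
theorem bloch_close_of_high_prob (F ρ : Matrix (Fin 2) (Fin 2) ℂ)
    (hF : QubitEffect F) (hρ : QubitState ρ) (ε : ℝ) (hε : 0 ≤ ε)
    (hprob : ((F * ρ).trace).re ≥ 1 - ε) (hy0 : (F.trace).re ≤ 1 + ε) :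
    Real.sqrt (∑ i, (bloch F i - bloch ρ i) ^ 2) ≤ Real.sqrt (4 * ε + ε ^ 2) :=
  bloch_close_of_high_prob_general F ρ hF hρ ε hprob hy0
end

section
/- Appendix C, Lemma 3: let F be a qubit effect with Bloch vector x⃗ = (x₁, x₂, 0) (vanishing third component) and x₀ = Re tr F ≥ c for some c > 0, and let ρ be a qubit state with Bloch vector r⃗ = (r₁, r₂, r₃). If Re tr(ρF) ≤ ε with 0 ≤ 2ε ≤ c, then √(r₁² + r₂²) ≥ 1 − 2ε/c and |r₃| ≤ √(1 − (1 − 2ε/c)²). -/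
open Matrix
open scoped ComplexOrder

/-!
Write `ρ = ½(1 + r⃗·σ⃗)` and `F = ½(x₀ + x⃗·σ⃗)`. For a Hermitian 2×2 matrix the determinant is
`¼(x₀² - |x⃗|²)`, so positivity gives `|r⃗| ≤ 1` and `|x⃗| ≤ x₀`, while `tr(ρF) = ½(x₀ + r⃗·x⃗)`.
As `x₃ = 0`, Cauchy–Schwarz in the first two coordinates bounds `r⃗·x⃗ ≥ -s x₀` with
`s = √(r₁² + r₂²) ≤ 1`, hence `2ε ≥ x₀(1 - s) ≥ c(1 - s)`. The bound on `r₃` then follows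
from `r₃² ≤ 1 - s²`.
-/

lemma bloch_two (A : Matrix (Fin 2) (Fin 2) ℂ) : bloch A 2 = (A 0 0).re - (A 1 1).re := by
  simp [bloch, pauli, trace_fin_two, mul_apply, sub_eq_add_neg]

namespace Matrix

variable {A B : Matrix (Fin 2) (Fin 2) ℂ}

lemma re_trace_fin_two : A.trace.re = (A 0 0).re + (A 1 1).re := by
  rw [trace_fin_two, Complex.add_re]

lemma IsHermitian.apply_one_zero (hA : A.IsHermitian) : A 1 0 = star (A 0 1) :=
  (hA.apply 1 0).symm

lemma IsHermitian.im_apply_self (hA : A.IsHermitian) (i : Fin 2) : (A i i).im = 0 :=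
  Complex.conj_eq_iff_im.mp (hA.apply i i)

lemma IsHermitian.bloch_zero (hA : A.IsHermitian) : bloch A 0 = 2 * (A 0 1).re := by
  simp [bloch, pauli, trace_fin_two, mul_apply, hA.apply_one_zero, two_mul]

lemma IsHermitian.bloch_one (hA : A.IsHermitian) : bloch A 1 = -2 * (A 0 1).im := by
  simp [bloch, pauli, trace_fin_two, mul_apply, hA.apply_one_zero, two_mul]

lemma IsHermitian.two_mul_re_trace_mul (hA : A.IsHermitian) (hB : B.IsHermitian) :
    2 * (A * B).trace.re = A.trace.re * B.trace.re + ∑ i, bloch A i * bloch B i := by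
  rw [Fin.sum_univ_three, hA.bloch_zero, hA.bloch_one, bloch_two, hB.bloch_zero, hB.bloch_one,
    bloch_two, re_trace_fin_two, re_trace_fin_two, re_trace_fin_two]
  simp only [mul_apply, Fin.sum_univ_two, hA.apply_one_zero, hB.apply_one_zero, RCLike.star_def,
    Complex.add_re, Complex.mul_re, Complex.conj_re, Complex.conj_im, hA.im_apply_self,
    hB.im_apply_self]
  ring

lemma IsHermitian.sq_re_trace_sub_sum_bloch_sq (hA : A.IsHermitian) :
    A.trace.re ^ 2 - ∑ i, bloch A i ^ 2 = 4 * A.det.re := by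
  rw [Fin.sum_univ_three, hA.bloch_zero, hA.bloch_one, bloch_two, re_trace_fin_two, det_fin_two]
  simp only [hA.apply_one_zero, RCLike.star_def, Complex.sub_re, Complex.mul_re, Complex.conj_re,
    Complex.conj_im, hA.im_apply_self]
  ring

lemma PosSemidef.sum_bloch_sq_le (hA : A.PosSemidef) : ∑ i, bloch A i ^ 2 ≤ A.trace.re ^ 2 := by
  have hdet : 0 ≤ A.det.re := (Complex.nonneg_iff.mp hA.det_nonneg).1
  linarith [hA.isHermitian.sq_re_trace_sub_sum_bloch_sq]

end Matrix

lemma neg_le_sqrt_mul_of_sq_add_sq_le {r₁ r₂ x₀ x₁ x₂ : ℝ} (hx₀ : 0 ≤ x₀)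
    (hx : x₁ ^ 2 + x₂ ^ 2 ≤ x₀ ^ 2) :
    -(r₁ * x₁ + r₂ * x₂) ≤ √(r₁ ^ 2 + r₂ ^ 2) * x₀ := by
  have hr : 0 ≤ r₁ ^ 2 + r₂ ^ 2 := by positivity
  refine neg_le.mp (abs_le_of_sq_le_sq' ?_ (by positivity)).1
  rw [mul_pow, Real.sq_sqrt hr]
  nlinarith [sq_nonneg (r₁ * x₂ - r₂ * x₁), mul_le_mul_of_nonneg_left hx hr]

lemma one_sub_two_mul_div_le_sqrt {r₁ r₂ x₀ x₁ x₂ c ε : ℝ} (hr : r₁ ^ 2 + r₂ ^ 2 ≤ 1)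
    (hx : x₁ ^ 2 + x₂ ^ 2 ≤ x₀ ^ 2) (hc : 0 < c) (hcx₀ : c ≤ x₀)
    (hε : x₀ + (r₁ * x₁ + r₂ * x₂) ≤ 2 * ε) :
    1 - 2 * ε / c ≤ √(r₁ ^ 2 + r₂ ^ 2) := by
  have hs : √(r₁ ^ 2 + r₂ ^ 2) ≤ 1 := Real.sqrt_le_one.mpr hr
  have hcs := neg_le_sqrt_mul_of_sq_add_sq_le (r₁ := r₁) (r₂ := r₂) (hc.le.trans hcx₀) hx
  have hgap : c * (1 - √(r₁ ^ 2 + r₂ ^ 2)) ≤ 2 * ε := by nlinarith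
  rw [sub_le_comm, le_div_iff₀ hc]
  linarith

lemma abs_le_sqrt_one_sub_sq {r₁ r₂ r₃ t : ℝ} (hr : r₁ ^ 2 + r₂ ^ 2 + r₃ ^ 2 ≤ 1) (ht : 0 ≤ t)
    (hts : t ≤ √(r₁ ^ 2 + r₂ ^ 2)) : |r₃| ≤ √(1 - t ^ 2) := by
  have ht_sq := pow_le_pow_left₀ ht hts 2
  rw [Real.sq_sqrt (by positivity)] at ht_sq
  exact Real.abs_le_sqrt (by linarith)

theorem bloch_purity_bound_general (F ρ : Matrix (Fin 2) (Fin 2) ℂ)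
    (hF : QubitEffect F) (hρ : QubitState ρ) (c ε : ℝ) (hc : 0 < c)
    (hx3 : bloch F 2 = 0) (hx0 : (F.trace).re ≥ c)
    (h2ε : 2 * ε ≤ c)
    (hprob : ((ρ * F).trace).re ≤ ε) :
    Real.sqrt ((bloch ρ 0) ^ 2 + (bloch ρ 1) ^ 2) ≥ 1 - 2 * ε / c ∧
    |bloch ρ 2| ≤ Real.sqrt (1 - (1 - 2 * ε / c) ^ 2) := by
  obtain ⟨hρ, hρ_trace⟩ := hρ
  have hr : bloch ρ 0 ^ 2 + bloch ρ 1 ^ 2 + bloch ρ 2 ^ 2 ≤ 1 := by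
    simpa [Fin.sum_univ_three, hρ_trace] using hρ.sum_bloch_sq_le
  have hx : bloch F 0 ^ 2 + bloch F 1 ^ 2 ≤ F.trace.re ^ 2 := by
    simpa [Fin.sum_univ_three, hx3] using hF.1.sum_bloch_sq_le
  have hpair : F.trace.re + (bloch ρ 0 * bloch F 0 + bloch ρ 1 * bloch F 1) ≤ 2 * ε := by
    have htr := hρ.isHermitian.two_mul_re_trace_mul hF.1.isHermitian
    simp only [hρ_trace, Complex.one_re, one_mul, Fin.sum_univ_three, hx3, mul_zero,
      add_zero] at htr
    linarith
  have hs := one_sub_two_mul_div_le_sqrt (by linarith [sq_nonneg (bloch ρ 2)]) hx hc hx0 hpair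
  have ht : 0 ≤ 1 - 2 * ε / c := sub_nonneg.mpr ((div_le_one hc).mpr h2ε)
  exact ⟨hs, abs_le_sqrt_one_sub_sq hr ht hs⟩

/-- Appendix C, Lemma 3: for a qubit effect `F` whose Bloch vector has vanishing third
component and `Re tr F ≥ c > 0`, and a qubit state `ρ` with `Re tr(ρF) ≤ ε`, `0 ≤ 2ε ≤ c`,
the Bloch vector `r` of `ρ` satisfies `√(r₁² + r₂²) ≥ 1 - 2ε/c` and
`|r₃| ≤ √(1 - (1 - 2ε/c)²)`. -/
theorem bloch_purity_bound (F ρ : Matrix (Fin 2) (Fin 2) ℂ)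
    (hF : QubitEffect F) (hρ : QubitState ρ) (c ε : ℝ) (hc : 0 < c)
    (hx3 : bloch F 2 = 0) (hx0 : (F.trace).re ≥ c)
    (hε : 0 ≤ ε) (h2ε : 2 * ε ≤ c)
    (hprob : ((ρ * F).trace).re ≤ ε) :
    Real.sqrt ((bloch ρ 0) ^ 2 + (bloch ρ 1) ^ 2) ≥ 1 - 2 * ε / c ∧
    |bloch ρ 2| ≤ Real.sqrt (1 - (1 - 2 * ε / c) ^ 2) :=
  bloch_purity_bound_general F ρ hF hρ c ε hc hx3 hx0 h2ε hprob
end
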